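/- arXiv:1705.01083 — 6 statements merged into one kernel-verified Lean document; each statement's English description precedes it below -/
import Mathlib

section
/- Let I ⊆ F be a monomial right ideal (the K-span of a right-ideal language L ⊆ W), let C = F/I, and let φ : F^n → C be the right F-module homomorphism sending the canonical basis element e_i to x_i + I. Then ker φ = ⊕_{i=1}^n e_i · (I :_R x_i), where (I :_R x_i) = {f ∈ F : x_i f ∈ I}. Moreover the image of φ is the right submodule B generated by x_1+I,…,x_n+I, and C/B is zero if I = F and one-dimensional over K otherwise. -/
noncomputable section

/-- The free associative algebra F = K⟨x_1,…,x_n⟩, as the monoid algebra of the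
free monoid of words. -/
abbrev FA (K : Type) [Field K] (n : ℕ) : Type := MonoidAlgebra K (FreeMonoid (Fin n))

/-- The monomial of F corresponding to a word. -/
def mono (K : Type) [Field K] {n : ℕ} (w : FreeMonoid (Fin n)) : FA K n :=
  MonoidAlgebra.of K (FreeMonoid (Fin n)) w

/-- The multidegree of a word: its i-th entry counts occurrences of x_i. -/
def wdeg {n : ℕ} (w : FreeMonoid (Fin n)) : Fin n →₀ ℕ :=
  Finsupp.equivFunOnFinite.symm fun i => (FreeMonoid.toList w).count i

open Classical

namespace Stmt6Aux

variable {K : Type} [Field K] {n : ℕ}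

lemma mono_eq (w : FreeMonoid (Fin n)) : mono K w = MonoidAlgebra.single w (1:K) := rfl

lemma word_dichotomy (y : FreeMonoid (Fin n)) : y = 1 ∨ ∃ i w, y = FreeMonoid.of i * w :=
  FreeMonoid.casesOn y (Or.inl rfl) fun i w => Or.inr ⟨i, w, rfl⟩

example : True := trivial

-- test: typecheck supported as submodule of FA
example (L : Set (FreeMonoid (Fin n))) : Submodule K (FA K n) := MonoidAlgebra.supported K K L

example (g : FA K n) (w : FreeMonoid (Fin n)) : K := g.coeff w

lemma coeff_of_mul_eq (i : Fin n) (f : FA K n) (w : FreeMonoid (Fin n)) :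
    (mono K (FreeMonoid.of i) * f).coeff (FreeMonoid.of i * w) = f.coeff w := by
  rw [mono_eq, MonoidAlgebra.coeff_single_mul_eq_mul_coeff (x := f) _ (fun a _ => mul_right_inj _), one_mul]

lemma coeff_of_mul_ne {i j : Fin n} (hij : j ≠ i) (f : FA K n) (w : FreeMonoid (Fin n)) :
    (mono K (FreeMonoid.of j) * f).coeff (FreeMonoid.of i * w) = 0 := by
  rw [mono_eq]
  apply MonoidAlgebra.single_mul_apply_of_not_exists_mul
  rintro ⟨d, hd⟩
  exact hij (List.head_eq_of_cons_eq (congrArg FreeMonoid.toList hd)).symm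

lemma coeff_of_mul_one (j : Fin n) (f : FA K n) :
    (mono K (FreeMonoid.of j) * f).coeff 1 = 0 := by
  rw [mono_eq]
  apply MonoidAlgebra.single_mul_apply_of_not_exists_mul
  rintro ⟨d, hd⟩
  exact List.cons_ne_nil j (FreeMonoid.toList d) (congrArg FreeMonoid.toList hd).symm

end Stmt6Aux

/-- for a monomial right ideal I (the span of a right-ideal
language L) and the right-module homomorphism φ : F^n → C = F/I, e_i ↦ x_i + I,
the kernel of φ is ⊕_i e_i·(I :_R x_i), the image of φ is the right submodule B
generated by the x_i + I, and C/B is zero if I = F and one-dimensional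
otherwise. -/
theorem stmt_6 (K : Type) [Field K] (n : ℕ) (hn : 1 ≤ n)
    (L : Set (FreeMonoid (Fin n))) (hL : ∀ w ∈ L, ∀ v, w * v ∈ L)
    (I : Submodule K (FA K n))
    (hI : I = Submodule.span K {f | ∃ w ∈ L, f = mono K w})
    (φ : (Fin n → FA K n) →ₗ[K] (FA K n ⧸ I))
    (hφ : ∀ f, φ f = I.mkQ (∑ i, mono K (FreeMonoid.of i) * f i)) :
    -- ker φ = ⊕_i e_i (I :_R x_i)
    LinearMap.ker φ =
      Submodule.pi Set.univ
        (fun i => Submodule.comap (LinearMap.mulLeft K (mono K (FreeMonoid.of i))) I)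
    -- range φ = B, the right submodule generated by x_1 + I, …, x_n + I
    ∧ LinearMap.range φ =
        Submodule.span K {c | ∃ i : Fin n, ∃ w : FreeMonoid (Fin n),
          c = I.mkQ (mono K (FreeMonoid.of i * w))}
    -- C/B is zero if I = F and one-dimensional over K otherwise
    ∧ Module.finrank K ((FA K n ⧸ I) ⧸ LinearMap.range φ) =
        (if I = ⊤ then 0 else 1) := by
  have hIs : I = MonoidAlgebra.supported K K L := by
    rw [hI, MonoidAlgebra.supported_eq_span_single]
    congr 1
    ext f
    constructor
    · rintro ⟨w, hw, rfl⟩; exact ⟨w, hw, rfl⟩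
    · rintro ⟨w, hw, rfl⟩; exact ⟨w, hw, rfl⟩
  have memI : ∀ g : FA K n, g ∈ I ↔ ∀ w ∉ L, g.coeff w = 0 := by
    intro g; rw [hIs]; exact MonoidAlgebra.mem_supported'
  -- part 1
  have part1 : LinearMap.ker φ =
      Submodule.pi Set.univ
        (fun i => Submodule.comap (LinearMap.mulLeft K (mono K (FreeMonoid.of i))) I) := by
    ext f
    simp only [LinearMap.mem_ker, hφ, Submodule.mem_pi, Set.mem_univ, forall_true_left,
      Submodule.mem_comap, LinearMap.mulLeft_apply, Submodule.mkQ_apply,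
      Submodule.Quotient.mk_eq_zero]
    constructor
    · intro hg i
      rw [memI] at hg ⊢
      intro y hy
      rcases Stmt6Aux.word_dichotomy y with rfl | ⟨j, w, rfl⟩
      · exact Stmt6Aux.coeff_of_mul_one i (f i)
      · by_cases hji : i = j
        · subst hji
          rw [Stmt6Aux.coeff_of_mul_eq]
          have := hg _ hy
          rw [MonoidAlgebra.coeff_sum, Finset.sum_apply'] at this
          rw [← this]
          rw [Finset.sum_eq_single i]
          · rw [Stmt6Aux.coeff_of_mul_eq]
          · intro b _ hb; exact Stmt6Aux.coeff_of_mul_ne hb (f b) w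
          · intro h; exact absurd (Finset.mem_univ i) h
        · exact Stmt6Aux.coeff_of_mul_ne hji (f i) w
    · intro h
      exact Submodule.sum_mem _ fun i _ => h i
  refine ⟨part1, ?_⟩
  set S : Set (FA K n ⧸ I) := {c | ∃ i : Fin n, ∃ w : FreeMonoid (Fin n),
      c = I.mkQ (mono K (FreeMonoid.of i * w))} with hSdef
  have part2 : LinearMap.range φ = Submodule.span K S := by
    apply le_antisymm
    · rintro _ ⟨f, rfl⟩
      rw [hφ, map_sum]
      apply Submodule.sum_mem
      intro i _
      have key : (⊤ : Submodule K (FA K n)) ≤ Submodule.comap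
          ((I.mkQ ∘ₗ LinearMap.mulLeft K (mono K (FreeMonoid.of i))).restrictScalars K)
          (Submodule.span K S) := by
        rw [← (by ext x; simp [MonoidAlgebra.mem_supported] :
            MonoidAlgebra.supported K K (Set.univ : Set (FreeMonoid (Fin n))) = ⊤),
          MonoidAlgebra.supported_eq_span_single, Submodule.span_le]
        rintro _ ⟨w, -, rfl⟩
        apply Submodule.subset_span
        refine ⟨i, w, ?_⟩
        simp only [Submodule.mem_comap, LinearMap.coe_comp, Function.comp_apply,
          LinearMap.mulLeft_apply, LinearMap.restrictScalars_apply, SetLike.mem_coe]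
        rw [Stmt6Aux.mono_eq, Stmt6Aux.mono_eq, MonoidAlgebra.single_mul_single, one_mul]
      have := key (Submodule.mem_top (x := f i))
      simpa using this
    · rw [Submodule.span_le]
      rintro _ ⟨i, w, rfl⟩
      refine ⟨fun j => if j = i then mono K w else 0, ?_⟩
      rw [hφ]
      congr 1
      rw [Finset.sum_eq_single i]
      · rw [if_pos rfl, Stmt6Aux.mono_eq, Stmt6Aux.mono_eq, MonoidAlgebra.single_mul_single,
          one_mul, Stmt6Aux.mono_eq]
      · intro b _ hb; rw [if_neg hb, mul_zero]
      · intro h; exact absurd (Finset.mem_univ i) h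
  refine ⟨part2, ?_⟩
  by_cases htop : I = ⊤
  · have : Subsingleton (FA K n ⧸ I) := by
      rw [Submodule.Quotient.subsingleton_iff]; exact htop
    have : Subsingleton ((FA K n ⧸ I) ⧸ LinearMap.range φ) := Quotient.instSubsingletonQuotient _
    rw [if_pos htop]
    exact Module.finrank_zero_of_subsingleton
  · rw [if_neg htop]
    have h1L : (1 : FreeMonoid (Fin n)) ∉ L := by
      intro h1
      apply htop
      have hLu : L = Set.univ := Set.eq_univ_of_forall fun w => by simpa using hL 1 h1 w
      rw [hIs, hLu]
      ext x; simp [MonoidAlgebra.mem_supported]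
    set J : Submodule K (FA K n) := Submodule.span K
        {f : FA K n | ∃ i : Fin n, ∃ w : FreeMonoid (Fin n), f = mono K (FreeMonoid.of i * w)}
      with hJdef
    have hJs : J = MonoidAlgebra.supported K K {w : FreeMonoid (Fin n) | w ≠ 1} := by
      rw [hJdef, MonoidAlgebra.supported_eq_span_single]
      congr 1
      ext f
      constructor
      · rintro ⟨i, w, rfl⟩
        refine ⟨FreeMonoid.of i * w, ?_, rfl⟩
        intro h
        exact List.cons_ne_nil i (FreeMonoid.toList w) (congrArg FreeMonoid.toList h)
      · rintro ⟨w, hw, rfl⟩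
        rcases Stmt6Aux.word_dichotomy w with rfl | ⟨i, v, rfl⟩
        · exact absurd rfl hw
        · exact ⟨i, v, rfl⟩
    have hIJ : I ≤ J := by
      rw [hIs, hJs]
      apply MonoidAlgebra.supported_mono
      intro w hw h1
      exact h1L (h1 ▸ hw)
    have hS : Submodule.span K S = Submodule.map I.mkQ J := by
      rw [hJdef, Submodule.map_span]
      congr 1
      ext c
      constructor
      · rintro ⟨i, w, rfl⟩; exact ⟨mono K (FreeMonoid.of i * w), ⟨i, w, rfl⟩, rfl⟩
      · rintro ⟨g, ⟨i, w, rfl⟩, rfl⟩; exact ⟨i, w, rfl⟩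
    rw [part2, hS]
    rw [(Submodule.quotientQuotientEquivQuotient I J hIJ).finrank_eq]
    have hker : J = LinearMap.ker ((Finsupp.lapply (M := K) (R := K)
        (1 : FreeMonoid (Fin n))) ∘ₗ (MonoidAlgebra.coeffLinearEquiv K).toLinearMap) := by
      rw [hJs]
      ext g
      rw [MonoidAlgebra.mem_supported']
      simp only [LinearMap.mem_ker, LinearMap.coe_comp, Function.comp_apply, LinearEquiv.coe_coe,
        MonoidAlgebra.coeffLinearEquiv_apply, Finsupp.lapply_apply]
      constructor
      · intro h; exact h 1 (fun hh => hh rfl)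
      · intro h w hw
        rcases Stmt6Aux.word_dichotomy w with rfl | ⟨i, v, rfl⟩
        · exact h
        · exact absurd (fun hh : FreeMonoid.of i * v = 1 =>
            List.cons_ne_nil i (FreeMonoid.toList v) (congrArg FreeMonoid.toList hh)) hw
    rw [hker]
    have hsurj : Function.Surjective ((Finsupp.lapply (M := K) (R := K)
        (1 : FreeMonoid (Fin n))) ∘ₗ (MonoidAlgebra.coeffLinearEquiv K).toLinearMap) :=
      fun c => ⟨MonoidAlgebra.single 1 c, by simp [MonoidAlgebra.coeff_single]⟩
    rw [(LinearMap.quotKerEquivOfSurjective _ hsurj).finrank_eq, Module.finrank_self]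
end
end

section
/- Let L ⊆ W be a right-ideal language whose orbit {(L : w) : w ∈ W} under the colon operators is finite (i.e., L is regular). Then the generating series H_L = Σ_{α∈ℕ^n} #{w ∈ W \ L : deg(w) = α} · t_1^{α_1}⋯t_n^{α_n} is a rational power series: there exist polynomials p, q ∈ ℤ[t_1,…,t_n] with q having constant term 1 such that q · H_L = p in ℤ[[t_1,…,t_n]]. -/
open Classical
noncomputable section Stmt8Aux
namespace Stmt8Aux

lemma sum_count_eq_length {n : ℕ} (w : List (Fin n)) :
    ∑ i, w.count i = w.length := by
  induction w with
  | nil => simp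
  | cons a w ih =>
    simp only [List.count_cons, List.length_cons, Finset.sum_add_distrib, ih]
    simp [Finset.sum_ite_eq, add_comm]

variable {n : ℕ} (L : Set (List (Fin n)))

def st (w : List (Fin n)) : Set (List (Fin n)) := {v | w ++ v ∈ L}

def Orb : Set (Set (List (Fin n))) := {Lc | ∃ w, Lc = st L w}

abbrev ι := ↥(Orb L)

def trans (i : Fin n) (s : ι L) : ι L := by
  refine ⟨{v | i :: v ∈ s.1}, ?_⟩
  obtain ⟨w, hw⟩ := s.2
  exact ⟨w ++ [i], by ext v; simp [hw, st, List.append_assoc]⟩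

def stateOf (w : List (Fin n)) : ι L := ⟨st L w, ⟨w, rfl⟩⟩

lemma stateOf_append (w : List (Fin n)) (i : Fin n) :
    stateOf L (w ++ [i]) = trans L i (stateOf L w) := by
  apply Subtype.ext
  ext v
  simp [stateOf, trans, st, List.append_assoc]

/-- words of given multidegree with given state -/
def WS (β : Fin n →₀ ℕ) (s : ι L) : Set (List (Fin n)) :=
  {w | (∀ i, w.count i = β i) ∧ stateOf L w = s}

lemma WS_finite (β : Fin n →₀ ℕ) (s : ι L) : (WS L β s).Finite := by
  apply (List.finite_length_eq (Fin n) (∑ i, β i)).subset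
  intro w hw
  have : w.length = ∑ i, w.count i := (sum_count_eq_length w).symm
  simp only [Set.mem_setOf_eq, this]
  exact Finset.sum_congr rfl fun i _ => hw.1 i

def g (β : Fin n →₀ ℕ) (s : ι L) : ℤ := (WS L β s).ncard

def G (s : ι L) : MvPowerSeries (Fin n) ℤ := fun β => g L β s

lemma coeff_G (β : Fin n →₀ ℕ) (s : ι L) :
    MvPowerSeries.coeff β (G L s) = g L β s := rfl

section Rec
open scoped Classical

def A (β : Fin n →₀ ℕ) (s : ι L) : Finset (List (Fin n)) := (WS_finite L β s).toFinset

lemma mem_A {β : Fin n →₀ ℕ} {s : ι L} {w : List (Fin n)} :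
    w ∈ A L β s ↔ (∀ i, w.count i = β i) ∧ stateOf L w = s := by
  simp [A, Set.Finite.mem_toFinset, WS]

lemma g_eq_card (β : Fin n →₀ ℕ) (s : ι L) : g L β s = ((A L β s).card : ℤ) := by
  rw [g, Set.ncard_eq_toFinset_card _ (WS_finite L β s)]; rfl

lemma g_zero (s : ι L) : g L 0 s = if stateOf L [] = s then 1 else 0 := by
  have : A L 0 s = if stateOf L [] = s then {([] : List (Fin n))} else ∅ := by
    ext w
    split_ifs with h
    · simp only [Finset.mem_singleton, mem_A]
      constructor
      · rintro ⟨hd, hs⟩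
        rcases w with _ | ⟨a, w⟩
        · rfl
        · have := hd a; simp [List.count_cons] at this
      · rintro rfl; exact ⟨fun i => by simp, h⟩
    · simp only [Finset.notMem_empty, iff_false, mem_A, not_and]
      intro hd hs
      have hw : w = [] := by
        rcases w with _ | ⟨a, w⟩
        · rfl
        · have := hd a; simp [List.count_cons] at this
      exact h (hw ▸ hs)
  rw [g_eq_card, this]
  split_ifs <;> simp

variable [Fintype (ι L)]

lemma A_biUnion {β : Fin n →₀ ℕ} (hβ : β ≠ 0) (s : ι L) :
    A L β s = Finset.univ.biUnion (fun p : Fin n × ι L =>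
      if trans L p.1 p.2 = s ∧ Finsupp.single p.1 1 ≤ β then
        (A L (β - Finsupp.single p.1 1) p.2).image (· ++ [p.1]) else ∅) := by
  ext w
  simp only [Finset.mem_biUnion, Finset.mem_univ, true_and]
  constructor
  · intro hw
    rw [mem_A] at hw
    obtain ⟨hd, hs⟩ := hw
    have hw0 : w ≠ [] := by
      rintro rfl
      exact hβ (Finsupp.ext fun i => by simpa using (hd i).symm)
    rcases w.eq_nil_or_concat' with rfl | ⟨w', i, rfl⟩
    · exact absurd rfl hw0
    refine ⟨(i, stateOf L w'), ?_⟩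
    dsimp only
    have hcnt : ∀ j, (w' ++ [i]).count j = w'.count j + Finsupp.single i 1 j := by
      intro j
      rw [List.count_append, Finsupp.single_apply]
      simp [List.count_singleton', eq_comm]
    have hle : Finsupp.single i 1 ≤ β := by
      rw [Finsupp.single_le_iff, ← hd i, hcnt i]
      simp
    rw [if_pos ⟨by rw [← stateOf_append]; exact hs, hle⟩, Finset.mem_image]
    refine ⟨w', ?_, rfl⟩
    rw [mem_A]
    refine ⟨fun j => ?_, rfl⟩
    have := hcnt j
    rw [hd j] at this
    rw [Finsupp.tsub_apply]
    omega
  · rintro ⟨⟨i, s'⟩, hw⟩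
    split_ifs at hw with h
    · dsimp only at h hw
      obtain ⟨htr, hle⟩ := h
      rw [Finset.mem_image] at hw
      obtain ⟨w', hw', rfl⟩ := hw
      rw [mem_A] at hw' ⊢
      obtain ⟨hd', hs'⟩ := hw'
      constructor
      · intro j
        rw [List.count_append, hd' j]
        have hc : List.count j [i] = Finsupp.single i 1 j := by
          rw [Finsupp.single_apply]; simp [List.count_singleton', eq_comm]
        rw [hc, ← Finsupp.add_apply, tsub_add_cancel_of_le hle]
      · rw [stateOf_append, hs', htr]
    · simp at hw

lemma g_rec {β : Fin n →₀ ℕ} (hβ : β ≠ 0) (s : ι L) :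
    g L β s = ∑ p : Fin n × ι L,
      if trans L p.1 p.2 = s ∧ Finsupp.single p.1 1 ≤ β then
        g L (β - Finsupp.single p.1 1) p.2 else 0 := by
  rw [g_eq_card, A_biUnion L hβ s, Finset.card_biUnion]
  · push_cast
    refine Finset.sum_congr rfl fun p _ => ?_
    split_ifs with h
    · rw [Finset.card_image_of_injective _ (fun a b hab => by simpa using hab), g_eq_card]
    · simp
  · rintro ⟨i, s'⟩ - ⟨j, t'⟩ - hne
    dsimp only [Function.onFun]
    split_ifs with h1 h2 h2
    · rw [Finset.disjoint_left]
      rintro w hw1 hw2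
      rw [Finset.mem_image] at hw1 hw2
      obtain ⟨w1, hw1, rfl⟩ := hw1
      obtain ⟨w2, hw2, heq⟩ := hw2
      have hij : j = i := by
        have h2 := congrArg List.getLast? heq
        simpa using h2
      subst hij
      have hww : w2 = w1 := by simpa using heq
      subst hww
      rw [mem_A] at hw1 hw2
      exact hne (by rw [Prod.ext_iff, ← hw1.2, ← hw2.2]; exact ⟨rfl, rfl⟩)
    all_goals simp
end Rec


section Key
open scoped Classical
variable [Fintype (ι L)]

lemma coeff_X_mul' (β : Fin n →₀ ℕ) (i : Fin n) (φ : MvPowerSeries (Fin n) ℤ) :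
    MvPowerSeries.coeff β (MvPowerSeries.X i * φ) =
      if Finsupp.single i 1 ≤ β then MvPowerSeries.coeff (β - Finsupp.single i 1) φ else 0 := by
  rw [MvPowerSeries.X_def, MvPowerSeries.coeff_monomial_mul]
  split_ifs <;> simp

lemma key (s : ι L) :
    G L s = (if stateOf L [] = s then 1 else 0) +
      ∑ s' : ι L, (∑ i : Fin n, if trans L i s' = s then
        (MvPowerSeries.X i : MvPowerSeries (Fin n) ℤ) else 0) * G L s' := by
  apply MvPowerSeries.ext
  intro β
  rw [map_add, map_sum]
  have hterm : ∀ s' : ι L, MvPowerSeries.coeff β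
      ((∑ i : Fin n, if trans L i s' = s then (MvPowerSeries.X i : MvPowerSeries (Fin n) ℤ)
        else 0) * G L s') =
      ∑ i : Fin n, if trans L i s' = s ∧ Finsupp.single i 1 ≤ β then
        g L (β - Finsupp.single i 1) s' else 0 := by
    intro s'
    rw [Finset.sum_mul, map_sum]
    refine Finset.sum_congr rfl fun i _ => ?_
    rw [ite_mul, zero_mul, apply_ite (MvPowerSeries.coeff β), coeff_X_mul', map_zero,
      coeff_G, ite_and]
  simp only [hterm]
  by_cases hβ : β = 0
  · subst hβ
    rw [coeff_G, g_zero, apply_ite (MvPowerSeries.coeff (0 : Fin n →₀ ℕ)),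
      MvPowerSeries.coeff_zero_one, map_zero]
    have : ∀ (s' : ι L) (i : Fin n),
        (if trans L i s' = s ∧ Finsupp.single i 1 ≤ (0 : Fin n →₀ ℕ) then
          g L (0 - Finsupp.single i 1) s' else 0) = 0 := by
      intro s' i
      rw [if_neg]
      rintro ⟨-, hle⟩
      rw [Finsupp.single_le_iff] at hle
      simp at hle
    simp [this]
  · rw [coeff_G, g_rec L hβ s, apply_ite (MvPowerSeries.coeff β), MvPowerSeries.coeff_one,
      if_neg hβ, map_zero, ite_self, zero_add, Fintype.sum_prod_type, Finset.sum_comm]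

end Key

section Mat
open scoped Classical
variable [Fintype (ι L)]

def Mp : Matrix (ι L) (ι L) (MvPolynomial (Fin n) ℤ) :=
  fun s s' => ∑ i : Fin n, if trans L i s' = s then MvPolynomial.X i else 0

def Amat : Matrix (ι L) (ι L) (MvPolynomial (Fin n) ℤ) := 1 - Mp L

def qpoly : MvPolynomial (Fin n) ℤ := (Amat L).det

def Ep : ι L → MvPolynomial (Fin n) ℤ := fun s => if stateOf L [] = s then 1 else 0

def Pvec : ι L → MvPolynomial (Fin n) ℤ :=
  fun s0 => ∑ t : ι L, Matrix.adjugate (Amat L) s0 t * Ep L t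

local notation "φR" => (MvPolynomial.coeToMvPowerSeries.ringHom :
  MvPolynomial (Fin n) ℤ →+* MvPowerSeries (Fin n) ℤ)

lemma constCoeff_q : MvPolynomial.coeff 0 (qpoly L) = 1 := by
  rw [← MvPolynomial.constantCoeff_eq]
  show (MvPolynomial.constantCoeff : MvPolynomial (Fin n) ℤ →+* ℤ) (qpoly L) = 1
  rw [qpoly, RingHom.map_det]
  have h1 : (Amat L).map MvPolynomial.constantCoeff = 1 := by
    ext s s'
    rw [Matrix.map_apply, Amat, Matrix.sub_apply, map_sub, Mp]
    rw [map_sum]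
    have : ∀ i : Fin n, MvPolynomial.constantCoeff
        (if trans L i s' = s then (MvPolynomial.X i : MvPolynomial (Fin n) ℤ) else 0) = 0 := by
      intro i
      rw [apply_ite MvPolynomial.constantCoeff, map_zero, MvPolynomial.constantCoeff_X, ite_self]
    rw [Finset.sum_congr rfl fun i _ => this i, Finset.sum_const_zero, sub_zero]
    rcases eq_or_ne s s' with rfl | h
    · simp [Matrix.one_apply]
    · simp [Matrix.one_apply, h]
  rw [RingHom.mapMatrix_apply, h1, Matrix.det_one]

lemma hMp (t s' : ι L) : (φR (Mp L t s') : MvPowerSeries (Fin n) ℤ) =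
    ∑ i : Fin n, if trans L i s' = t then MvPowerSeries.X i else 0 := by
  rw [Mp, map_sum]
  refine Finset.sum_congr rfl fun i _ => ?_
  rw [apply_ite φR, map_zero, MvPolynomial.coeToMvPowerSeries.ringHom_apply, MvPolynomial.coe_X]

lemma systemA (t : ι L) :
    ∑ s' : ι L, (φR (Amat L t s') : MvPowerSeries (Fin n) ℤ) * G L s' = φR (Ep L t) := by
  have hsplit : ∀ s' : ι L, (φR (Amat L t s') : MvPowerSeries (Fin n) ℤ) * G L s' =
      (if t = s' then G L s' else 0) -
        (∑ i : Fin n, if trans L i s' = t then MvPowerSeries.X i else 0) * G L s' := by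
    intro s'
    rw [Amat, Matrix.sub_apply, map_sub, sub_mul, Matrix.one_apply, apply_ite φR, map_one,
      map_zero, hMp, ite_mul, one_mul, zero_mul]
  rw [Finset.sum_congr rfl fun s' _ => hsplit s', Finset.sum_sub_distrib, Finset.sum_ite_eq,
    if_pos (Finset.mem_univ t), key L t, add_sub_cancel_right, Ep, apply_ite φR, map_one,
    map_zero]

lemma q_mul_G (s0 : ι L) :
    (φR (qpoly L) : MvPowerSeries (Fin n) ℤ) * G L s0 = φR (Pvec L s0) := by
  have h1 : ∀ s' : ι L, (Matrix.adjugate (Amat L) * Amat L) s0 s' =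
      qpoly L * (if s0 = s' then 1 else 0) := by
    intro s'
    rw [Matrix.adjugate_mul, Matrix.smul_apply, Matrix.one_apply, smul_eq_mul, qpoly]
  have h2 : ∑ s' : ι L, (φR ((Matrix.adjugate (Amat L) * Amat L) s0 s') :
      MvPowerSeries (Fin n) ℤ) * G L s' = φR (qpoly L) * G L s0 := by
    simp only [h1, map_mul, apply_ite φR, map_one, map_zero, mul_ite, mul_one, mul_zero,
      ite_mul, zero_mul]
    rw [Finset.sum_ite_eq, if_pos (Finset.mem_univ s0)]
  have h3 : ∑ s' : ι L, (φR ((Matrix.adjugate (Amat L) * Amat L) s0 s') :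
      MvPowerSeries (Fin n) ℤ) * G L s' =
      ∑ t : ι L, (φR (Matrix.adjugate (Amat L) s0 t) : MvPowerSeries (Fin n) ℤ) * φR (Ep L t) := by
    simp only [Matrix.mul_apply, map_sum, map_mul, Finset.sum_mul]
    rw [Finset.sum_comm]
    refine Finset.sum_congr rfl fun t _ => ?_
    rw [← systemA L t, Finset.mul_sum]
    exact Finset.sum_congr rfl fun s' _ => mul_assoc _ _ _
  rw [← h2, h3, Pvec, map_sum]
  exact Finset.sum_congr rfl fun t _ => (map_mul φR _ _).symm

end Mat

section Final
open scoped Classical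

lemma compl_finite (β : Fin n →₀ ℕ) :
    {w : List (Fin n) | w ∉ L ∧ ∀ i, w.count i = β i}.Finite := by
  apply (List.finite_length_eq (Fin n) (∑ i, β i)).subset
  intro w hw
  have : w.length = ∑ i, w.count i := (sum_count_eq_length w).symm
  simp only [Set.mem_setOf_eq, this]
  exact Finset.sum_congr rfl fun i _ => hw.2 i

lemma notMem_iff (w : List (Fin n)) : w ∉ L ↔ ([] : List (Fin n)) ∉ (stateOf L w).1 := by
  simp [stateOf, st]

lemma H_count [Fintype (ι L)] (β : Fin n →₀ ℕ) :
    ({w : List (Fin n) | w ∉ L ∧ ∀ i, w.count i = β i}.ncard : ℤ) =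
      ∑ s : ι L, if ([] : List (Fin n)) ∉ s.1 then g L β s else 0 := by
  rw [Set.ncard_eq_toFinset_card _ (compl_finite L β)]
  have hB : (compl_finite L β).toFinset = Finset.univ.biUnion fun s : ι L =>
      if ([] : List (Fin n)) ∉ s.1 then A L β s else ∅ := by
    ext w
    simp only [Set.Finite.mem_toFinset, Set.mem_setOf_eq, Finset.mem_biUnion, Finset.mem_univ,
      true_and]
    constructor
    · rintro ⟨hnL, hd⟩
      refine ⟨stateOf L w, ?_⟩
      rw [if_pos ((notMem_iff L w).mp hnL), mem_A]
      exact ⟨hd, rfl⟩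
    · rintro ⟨s, hw⟩
      split_ifs at hw with h
      · simp at hw
      · rw [mem_A] at hw
        refine ⟨(notMem_iff L w).mpr ?_, hw.1⟩
        rw [hw.2]; exact h
  rw [hB, Finset.card_biUnion]
  · push_cast
    refine Finset.sum_congr rfl fun s _ => ?_
    split_ifs
    · simp
    · rw [g_eq_card]
  · intro s _ t _ hst
    rw [Function.onFun, Finset.disjoint_left]
    intro w hw1 hw2
    split_ifs at hw1 hw2 with h1 h2
    all_goals first
      | simp at hw1
      | simp at hw2
      | (rw [mem_A] at hw1 hw2; exact hst (hw1.2.symm.trans hw2.2))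

end Final
end Stmt8Aux

/-- a right-ideal language with finite orbit under the colon
operators has a rational generating series. -/
theorem stmt_8 (n : ℕ) (hn : 1 ≤ n) (L : Set (List (Fin n)))
    (hL : ∀ w ∈ L, ∀ v, w ++ v ∈ L)
    (hfin : Set.Finite {Lc : Set (List (Fin n)) | ∃ w, Lc = {v | w ++ v ∈ L}})
    (H : MvPowerSeries (Fin n) ℤ)
    (hH : ∀ β : Fin n →₀ ℕ, MvPowerSeries.coeff β H =
      ({w : List (Fin n) | w ∉ L ∧ ∀ i, w.count i = β i}.ncard : ℤ)) :
    ∃ p q : MvPolynomial (Fin n) ℤ, MvPolynomial.coeff 0 q = 1 ∧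
      (q : MvPowerSeries (Fin n) ℤ) * H = (p : MvPowerSeries (Fin n) ℤ) := by
  classical
  haveI : Fintype (Stmt8Aux.ι L) := hfin.fintype
  refine ⟨∑ s : Stmt8Aux.ι L, if ([] : List (Fin n)) ∉ s.1 then Stmt8Aux.Pvec L s else 0,
    Stmt8Aux.qpoly L, Stmt8Aux.constCoeff_q L, ?_⟩
  have hHG : H = ∑ s : Stmt8Aux.ι L, if ([] : List (Fin n)) ∉ s.1 then Stmt8Aux.G L s else 0 := by
    apply MvPowerSeries.ext
    intro β
    rw [hH β, Stmt8Aux.H_count L β, map_sum]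
    refine Finset.sum_congr rfl fun s _ => ?_
    rw [apply_ite (MvPowerSeries.coeff β), map_zero, Stmt8Aux.coeff_G]
  have hcoe : ∀ r : MvPolynomial (Fin n) ℤ,
      (r : MvPowerSeries (Fin n) ℤ) = MvPolynomial.coeToMvPowerSeries.ringHom r :=
    fun r => (MvPolynomial.coeToMvPowerSeries.ringHom_apply r).symm
  rw [hHG, hcoe, hcoe, map_sum, Finset.mul_sum]
  refine Finset.sum_congr rfl fun s _ => ?_
  rw [mul_ite, mul_zero, apply_ite (MvPolynomial.coeToMvPowerSeries.ringHom :
    MvPolynomial (Fin n) ℤ →+* MvPowerSeries (Fin n) ℤ), map_zero]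
  split_ifs
  · rfl
  · exact Stmt8Aux.q_mul_G L s
end Stmt8Aux
end

section
/- Let N = ⊕_{i=1}^r F[−δ_i]/M be a finitely generated multigraded right F-module. Fix a monomial ordering on ⊕_{i=1}^r F[−δ_i] and write the leading monomial module as LM(M) = ⊕_{i=1}^r e_i I_i for monomial right ideals I_i ⊆ F. If for each i the language L_i = I_i ∩ W has finite orbit under the colon operators (i.e., each I_i is regular), then HS(N) is a rational function with integer coefficients: there exist p, q ∈ ℤ[t_1,…,t_n] with q having constant term 1 such that q · HS(N) = p in ℤ[[t_1,…,t_n]]. -/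
noncomputable section

/-- The multihomogeneous component of multidegree α of the shifted free right
module ⊕_{i<r} F[−δ_i] : the K-span of the monomials e_i·w with δ_i + deg w = α. -/
def freeComp (K : Type) [Field K] {n r : ℕ} (δ : Fin r → (Fin n →₀ ℕ))
    (α : Fin n →₀ ℕ) : Submodule K (Fin r → FA K n) :=
  Submodule.span K
    {v | ∃ i w, δ i + wdeg w = α ∧ v = Pi.single i (mono K w)}

/-- μ = (i, w) is a leading monomial of (a nonzero element of) M with respect
to the monomial ordering `lt`. -/
def isLM {K : Type} [Field K] {n r : ℕ}
    (lt : (Fin r × FreeMonoid (Fin n)) → (Fin r × FreeMonoid (Fin n)) → Prop)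
    (M : Submodule K (Fin r → FA K n)) (μ : Fin r × FreeMonoid (Fin n)) : Prop :=
  ∃ v ∈ M, (v μ.1).coeff μ.2 ≠ 0 ∧
    ∀ ν : Fin r × FreeMonoid (Fin n), (v ν.1).coeff ν.2 ≠ 0 → ν = μ ∨ lt ν μ

namespace Stmt9
open scoped Classical
open FreeMonoid

variable {n : ℕ}

lemma wdeg_apply (w : FreeMonoid (Fin n)) (i : Fin n) :
    wdeg w i = (FreeMonoid.toList w).count i := by
  simp [wdeg]

lemma wdeg_mul (u v : FreeMonoid (Fin n)) : wdeg (u * v) = wdeg u + wdeg v := by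
  ext i
  simp [wdeg_apply, FreeMonoid.toList_mul, List.count_append]

lemma wdeg_one : wdeg (1 : FreeMonoid (Fin n)) = 0 := by
  ext i; simp [wdeg_apply]

lemma wdeg_of (j : Fin n) : wdeg (FreeMonoid.of j) = Finsupp.single j 1 := by
  ext i
  simp [wdeg_apply, FreeMonoid.toList_of, List.count_singleton, Finsupp.single_apply]

lemma sum_count (l : List (Fin n)) : ∑ i, l.count i = l.length := by
  induction l with
  | nil => simp
  | cons a t ih => simp [List.count_cons, Finset.sum_add_distrib, ih, add_comm]

lemma length_eq_of_wdeg {w : FreeMonoid (Fin n)} {α : Fin n →₀ ℕ} (h : wdeg w = α) :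
    (FreeMonoid.toList w).length = ∑ i, α i := by
  rw [← sum_count]
  exact Finset.sum_congr rfl fun i _ => by rw [← wdeg_apply, h]

lemma finite_wdeg_eq (α : Fin n →₀ ℕ) : {w : FreeMonoid (Fin n) | wdeg w = α}.Finite := by
  apply Set.Finite.subset (List.finite_length_eq (Fin n) (∑ i, α i))
  intro w hw
  exact length_eq_of_wdeg hw

lemma wdeg_eq_zero {w : FreeMonoid (Fin n)} (h : wdeg w = 0) : w = 1 := by
  have := length_eq_of_wdeg h
  simp at this
  simpa using congrArg FreeMonoid.ofList this


def cnt (S : Set (FreeMonoid (Fin n))) (α : Fin n →₀ ℕ) : ℕ :=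
  Set.ncard {w | wdeg w = α ∧ w ∉ S}

def colonSet (j : Fin n) (S : Set (FreeMonoid (Fin n))) : Set (FreeMonoid (Fin n)) :=
  {v | FreeMonoid.of j * v ∈ S}

lemma finite_U (S : Set (FreeMonoid (Fin n))) (α : Fin n →₀ ℕ) :
    {w : FreeMonoid (Fin n) | wdeg w = α ∧ w ∉ S}.Finite :=
  (finite_wdeg_eq α).subset (fun w hw => hw.1)

lemma inj_mul_left (j : Fin n) :
    Function.Injective (fun v : FreeMonoid (Fin n) => FreeMonoid.of j * v) := by
  intro a b h
  have h2 : j :: FreeMonoid.toList a = j :: FreeMonoid.toList b := congrArg FreeMonoid.toList h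
  have h3 : FreeMonoid.toList a = FreeMonoid.toList b := by simpa using h2
  simpa using congrArg FreeMonoid.ofList h3

lemma exists_head {w : FreeMonoid (Fin n)} (hw : w ≠ 1) :
    ∃ j v, w = FreeMonoid.of j * v := by
  rcases h : FreeMonoid.toList w with _ | ⟨a, t⟩
  · exact absurd (by simpa using congrArg FreeMonoid.ofList h) hw
  · refine ⟨a, FreeMonoid.ofList t, ?_⟩
    have := congrArg FreeMonoid.ofList h
    simpa using this

lemma not_single_le_zero (j : Fin n) : ¬ Finsupp.single j 1 ≤ (0 : Fin n →₀ ℕ) := by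
  intro h
  simpa using (Finsupp.le_def.mp h j)

lemma cnt_rec (S : Set (FreeMonoid (Fin n))) (α : Fin n →₀ ℕ) :
    cnt S α = (if α = 0 then (if (1 : FreeMonoid (Fin n)) ∈ S then 0 else 1) else 0)
      + ∑ j : Fin n, (if Finsupp.single j 1 ≤ α then
          cnt (colonSet j S) (α - Finsupp.single j 1) else 0) := by
  classical
  rcases eq_or_ne α 0 with rfl | hα
  · rw [Finset.sum_eq_zero (fun j _ => by rw [if_neg (not_single_le_zero j)]), add_zero,
      if_pos rfl]
    by_cases h1 : (1 : FreeMonoid (Fin n)) ∈ S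
    · rw [if_pos h1, cnt]
      have hset : {w : FreeMonoid (Fin n) | wdeg w = 0 ∧ w ∉ S} = ∅ := by
        ext w
        simp only [Set.mem_setOf_eq, Set.mem_empty_iff_false, iff_false, not_and]
        intro hd hns
        exact hns (by rwa [wdeg_eq_zero hd])
      rw [hset, Set.ncard_empty]
    · rw [if_neg h1, cnt]
      have hset : {w : FreeMonoid (Fin n) | wdeg w = 0 ∧ w ∉ S} = {1} := by
        ext w
        simp only [Set.mem_setOf_eq, Set.mem_singleton_iff]
        constructor
        · rintro ⟨hd, _⟩; exact wdeg_eq_zero hd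
        · rintro rfl; exact ⟨wdeg_one, h1⟩
      rw [hset, Set.ncard_singleton]
  · rw [if_neg hα, zero_add]
    -- the finite pieces
    set V : Fin n → Set (FreeMonoid (Fin n)) := fun j =>
      {v | wdeg v = α - Finsupp.single j 1 ∧ Finsupp.single j 1 ≤ α ∧ v ∉ colonSet j S} with hV
    have finV : ∀ j, (V j).Finite := fun j =>
      (finite_wdeg_eq (α - Finsupp.single j 1)).subset (fun v hv => hv.1)
    have key : (finite_U S α).toFinset
        = Finset.univ.biUnion (fun j => ((finV j).toFinset).image
            (fun v => FreeMonoid.of j * v)) := by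
      ext w
      simp only [Set.Finite.mem_toFinset, Set.mem_setOf_eq, Finset.mem_biUnion,
        Finset.mem_univ, true_and, Finset.mem_image]
      constructor
      · rintro ⟨hdeg, hns⟩
        have hw1 : w ≠ 1 := fun h => hα (by rw [h, wdeg_one] at hdeg; exact hdeg.symm)
        obtain ⟨j, v, rfl⟩ := exists_head hw1
        refine ⟨j, v, ?_, rfl⟩
        rw [wdeg_mul, wdeg_of] at hdeg
        have hle : Finsupp.single j 1 ≤ α := hdeg ▸ le_add_self.trans_eq (add_comm _ _)
        refine ⟨?_, hle, fun hc => hns hc⟩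
        · exact eq_tsub_of_add_eq (by rw [add_comm]; exact hdeg)
      · rintro ⟨j, v, hv, rfl⟩
        simp only [Set.Finite.mem_toFinset, Set.mem_setOf_eq, hV] at hv
        obtain ⟨hdeg, hle, hns⟩ := hv
        refine ⟨?_, hns⟩
        rw [wdeg_mul, wdeg_of, hdeg, add_tsub_cancel_of_le hle]
    have hdisj : ∀ j ∈ Finset.univ, ∀ j' ∈ Finset.univ, j ≠ j' →
        Disjoint (((finV j).toFinset).image (fun v => FreeMonoid.of j * v))
          (((finV j').toFinset).image (fun v => FreeMonoid.of j' * v)) := by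
      intro j _ j' _ hjj
      rw [Finset.disjoint_left]
      rintro w hw hw'
      simp only [Finset.mem_image] at hw hw'
      obtain ⟨v, _, rfl⟩ := hw
      obtain ⟨v', _, he⟩ := hw'
      have : j' :: FreeMonoid.toList v' = j :: FreeMonoid.toList v :=
        congrArg FreeMonoid.toList he
      exact hjj (by injection this with h1 _; exact h1.symm)
    have hcard := congrArg Finset.card key
    rw [Finset.card_biUnion hdisj] at hcard
    rw [cnt, Set.ncard_eq_toFinset_card _ (finite_U S α), hcard]
    refine Finset.sum_congr rfl (fun j _ => ?_)
    rw [Finset.card_image_of_injective _ (inj_mul_left j)]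
    split_ifs with hle
    · rw [cnt, Set.ncard_eq_toFinset_card _
        ((finite_wdeg_eq (α - Finsupp.single j 1)).subset (fun v hv => hv.1))]
      congr 1
      ext v
      simp only [Set.Finite.mem_toFinset, Set.mem_setOf_eq, hV]
      tauto
    · rw [Finset.card_eq_zero, ← Finset.not_nonempty_iff_eq_empty]
      rintro ⟨v, hv⟩
      simp only [Set.Finite.mem_toFinset, Set.mem_setOf_eq, hV] at hv
      exact hle hv.2.1

def g (S : Set (FreeMonoid (Fin n))) : MvPowerSeries (Fin n) ℤ :=
  fun α => (cnt S α : ℤ)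

lemma coeff_g (S : Set (FreeMonoid (Fin n))) (α : Fin n →₀ ℕ) :
    MvPowerSeries.coeff α (g S) = (cnt S α : ℤ) := rfl

def csc (S : Set (FreeMonoid (Fin n))) : ℤ :=
  if (1 : FreeMonoid (Fin n)) ∈ S then 0 else 1

lemma g_rec (S : Set (FreeMonoid (Fin n))) :
    g S = (MvPowerSeries.C (csc S) : MvPowerSeries (Fin n) ℤ)
      + ∑ j : Fin n, MvPowerSeries.X j * g (colonSet j S) := by
  ext α
  rw [map_add, map_sum, coeff_g, cnt_rec S α, MvPowerSeries.coeff_C]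
  push_cast
  congr 1
  refine Finset.sum_congr rfl (fun j _ => ?_)
  rw [MvPowerSeries.X_def, MvPowerSeries.coeff_monomial_mul, coeff_g]
  split_ifs <;> simp

lemma rational_g (L : Set (FreeMonoid (Fin n)))
    (h : {Lc : Set (FreeMonoid (Fin n)) | ∃ w, Lc = {v | w * v ∈ L}}.Finite) :
    ∃ p q : MvPolynomial (Fin n) ℤ, MvPolynomial.coeff 0 q = 1 ∧
      (q : MvPowerSeries (Fin n) ℤ) * g L = (p : MvPowerSeries (Fin n) ℤ) := by
  classical
  set O := {Lc : Set (FreeMonoid (Fin n)) | ∃ w, Lc = {v | w * v ∈ L}} with hO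
  haveI : Fintype O := h.fintype
  -- colon maps
  have hcm : ∀ (j : Fin n) (s : O), colonSet j s.val ∈ O := by
    rintro j ⟨s, w, rfl⟩
    refine ⟨w * FreeMonoid.of j, ?_⟩
    ext v
    simp only [colonSet, Set.mem_setOf_eq, mul_assoc]
  set cm : Fin n → O → O := fun j s => ⟨colonSet j s.val, hcm j s⟩ with hcmdef
  set T : Matrix O O (MvPolynomial (Fin n) ℤ) := fun s t =>
    ∑ j : Fin n, if cm j s = t then MvPolynomial.X j else 0 with hT
  set A : Matrix O O (MvPolynomial (Fin n) ℤ) := 1 - T with hA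
  set φ : MvPolynomial (Fin n) ℤ →+* MvPowerSeries (Fin n) ℤ :=
    MvPolynomial.coeToMvPowerSeries.ringHom with hφ
  have hφX : ∀ j, φ (MvPolynomial.X j) = MvPowerSeries.X j := fun j =>
    MvPolynomial.coe_X j
  have hφC : ∀ a : ℤ, φ (MvPolynomial.C a) = (MvPowerSeries.C a : MvPowerSeries (Fin n) ℤ) := fun a =>
    MvPolynomial.coe_C a
  -- key linear system
  have heq : ∀ s : O, ∑ t : O, φ (A s t) * g t.val
      = (MvPowerSeries.C (csc s.val) : MvPowerSeries (Fin n) ℤ) := by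
    intro s
    have h1 : ∀ t : O, φ (A s t) * g t.val
        = (if s = t then g t.val else 0) - φ (T s t) * g t.val := by
      intro t
      rw [hA, Matrix.sub_apply, Matrix.one_apply, map_sub, sub_mul]
      congr 1
      split_ifs <;> simp
    rw [Finset.sum_congr rfl (fun t _ => h1 t), Finset.sum_sub_distrib,
      Finset.sum_ite_eq Finset.univ s (fun t => g t.val)]
    rw [if_pos (Finset.mem_univ s)]
    have h2 : ∑ t : O, φ (T s t) * g t.val
        = ∑ j : Fin n, MvPowerSeries.X j * g (colonSet j s.val) := by
      have : ∀ t : O, φ (T s t) * g t.val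
          = ∑ j : Fin n, (if cm j s = t then MvPowerSeries.X j * g t.val else 0) := by
        intro t
        rw [hT]
        simp only [map_sum]
        rw [Finset.sum_mul]
        refine Finset.sum_congr rfl (fun j _ => ?_)
        split_ifs with hh <;> simp [hh, hφX]
      rw [Finset.sum_congr rfl (fun t _ => this t), Finset.sum_comm]
      refine Finset.sum_congr rfl (fun j _ => ?_)
      rw [Finset.sum_ite_eq Finset.univ (cm j s) (fun t => MvPowerSeries.X j * g t.val)]
      rw [if_pos (Finset.mem_univ _)]
    rw [h2, g_rec s.val]
    ring
  -- multiply by adjugate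
  have hmain : ∀ u : O, φ A.det * g u.val
      = φ (∑ s : O, A.adjugate u s * MvPolynomial.C (csc s.val)) := by
    intro u
    have h3 : ∑ s : O, φ (A.adjugate u s) * (∑ t : O, φ (A s t) * g t.val)
        = ∑ s : O, φ (A.adjugate u s) * (MvPowerSeries.C (csc s.val) : MvPowerSeries (Fin n) ℤ) := by
      refine Finset.sum_congr rfl (fun s _ => by rw [heq s])
    calc φ A.det * g u.val
        = ∑ t : O, φ ((A.adjugate * A) u t) * g t.val := by
          rw [Matrix.adjugate_mul]
          have : ∀ t : O, φ ((A.det • (1 : Matrix O O (MvPolynomial (Fin n) ℤ))) u t) * g t.val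
              = (if u = t then φ A.det * g t.val else 0) := by
            intro t
            rw [Matrix.smul_apply, Matrix.one_apply, smul_eq_mul]
            split_ifs <;> simp
          rw [Finset.sum_congr rfl (fun t _ => this t),
            Finset.sum_ite_eq Finset.univ u (fun t => φ A.det * g t.val),
            if_pos (Finset.mem_univ u)]
      _ = ∑ s : O, φ (A.adjugate u s) * (∑ t : O, φ (A s t) * g t.val) := by
          simp only [Matrix.mul_apply, map_sum, map_mul, Finset.mul_sum, Finset.sum_mul]
          rw [Finset.sum_comm]
          refine Finset.sum_congr rfl (fun s _ => Finset.sum_congr rfl (fun t _ => by ring))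
      _ = φ (∑ s : O, A.adjugate u s * MvPolynomial.C (csc s.val)) := by
          rw [h3, map_sum]
          refine Finset.sum_congr rfl (fun s _ => by rw [map_mul, hφC])
  -- the state corresponding to L itself
  have hL : L ∈ O := ⟨1, by ext v; simp [one_mul]⟩
  refine ⟨∑ s : O, A.adjugate ⟨L, hL⟩ s * MvPolynomial.C (csc s.val), A.det, ?_, ?_⟩
  · rw [← MvPolynomial.constantCoeff_eq]
    show MvPolynomial.constantCoeff A.det = 1
    rw [RingHom.map_det, RingHom.mapMatrix_apply]
    have : A.map MvPolynomial.constantCoeff = 1 := by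
      ext s t
      rw [Matrix.map_apply, hA, Matrix.sub_apply, map_sub, hT]
      rw [map_sum]
      rw [Finset.sum_eq_zero (fun j _ => by split_ifs <;> simp), sub_zero]
      rw [Matrix.one_apply, Matrix.one_apply]
      split_ifs <;> simp
    rw [this, Matrix.det_one]
  · exact hmain ⟨L, hL⟩

lemma rational_H {r : ℕ} (δ : Fin r → (Fin n →₀ ℕ)) (Li : Fin r → Set (FreeMonoid (Fin n)))
    (horb : ∀ i, Set.Finite {Lc : Set (FreeMonoid (Fin n)) | ∃ w, Lc = {v | w * v ∈ Li i}})
    (H : MvPowerSeries (Fin n) ℤ)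
    (hHg : H = ∑ i : Fin r,
      ((MvPolynomial.monomial (δ i) (1 : ℤ) : MvPolynomial (Fin n) ℤ) :
        MvPowerSeries (Fin n) ℤ) * g (Li i)) :
    ∃ p q : MvPolynomial (Fin n) ℤ, MvPolynomial.coeff 0 q = 1 ∧
      (q : MvPowerSeries (Fin n) ℤ) * H = (p : MvPowerSeries (Fin n) ℤ) := by
  classical
  choose p q hq1 hqg using fun i => rational_g (Li i) (horb i)
  set φ : MvPolynomial (Fin n) ℤ →+* MvPowerSeries (Fin n) ℤ :=
    MvPolynomial.coeToMvPowerSeries.ringHom with hφ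
  refine ⟨∑ i : Fin r, MvPolynomial.monomial (δ i) (1 : ℤ) * p i *
      ∏ k ∈ Finset.univ.erase i, q k, ∏ i : Fin r, q i, ?_, ?_⟩
  · rw [← MvPolynomial.constantCoeff_eq, map_prod]
    have hc : ∀ i ∈ Finset.univ, MvPolynomial.constantCoeff (q i) = 1 := fun i _ => by
      rw [MvPolynomial.constantCoeff_eq]; exact hq1 i
    rw [Finset.prod_congr rfl hc, Finset.prod_const_one]
  · show φ _ * H = φ _
    rw [hHg, map_sum, Finset.mul_sum]
    rw [map_prod]
    refine Finset.sum_congr rfl (fun i _ => ?_)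
    rw [← Finset.mul_prod_erase Finset.univ _ (Finset.mem_univ i)]
    have hpg : φ (q i) * g (Li i) = φ (p i) := hqg i
    rw [map_mul, map_mul]
    calc φ (q i) * (∏ k ∈ Finset.univ.erase i, φ (q k)) *
          (φ (MvPolynomial.monomial (δ i) 1) * g (Li i))
        = φ (MvPolynomial.monomial (δ i) 1) * (φ (q i) * g (Li i)) *
          (∏ k ∈ Finset.univ.erase i, φ (q k)) := by ring
      _ = _ := by
          rw [hpg, map_prod]



variable {K : Type} [Field K] {n r : ℕ}

def E (K : Type) [Field K] {n r : ℕ} (μ : Fin r × FreeMonoid (Fin n)) : Fin r → FA K n :=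
  Pi.single μ.1 (mono K μ.2)

def coef (v : Fin r → FA K n) (μ : Fin r × FreeMonoid (Fin n)) : K := (v μ.1).coeff μ.2

lemma coef_add (u v : Fin r → FA K n) (μ) : coef (u + v) μ = coef u μ + coef v μ := rfl

lemma coef_smul (c : K) (v : Fin r → FA K n) (μ) : coef (c • v) μ = c * coef v μ := rfl

lemma coef_sub (u v : Fin r → FA K n) (μ) : coef (u - v) μ = coef u μ - coef v μ := rfl

lemma coef_zero (μ : Fin r × FreeMonoid (Fin n)) : coef (0 : Fin r → FA K n) μ = 0 := rfl

lemma ext_coef {u v : Fin r → FA K n} (h : ∀ μ, coef u μ = coef v μ) : u = v := by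
  funext i
  ext w
  exact h (i, w)

lemma coef_E (ν μ : Fin r × FreeMonoid (Fin n)) :
    coef (E K ν) μ = if ν = μ then 1 else 0 := by
  rcases μ with ⟨i, w⟩
  rcases ν with ⟨i', w'⟩
  simp only [coef, E, Pi.single_apply, mono, MonoidAlgebra.of_apply, Prod.mk.injEq]
  rcases eq_or_ne i i' with rfl | hi
  · rw [if_pos rfl]
    rw [MonoidAlgebra.single_apply]
    by_cases hw : w' = w <;> simp [hw]
  · rw [if_neg hi, if_neg (by tauto)]
    rfl

def suppF (v : Fin r → FA K n) : Finset (Fin r × FreeMonoid (Fin n)) :=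
  Finset.univ.biUnion fun i => (v i).coeff.support.image fun w => (i, w)

lemma mem_suppF {v : Fin r → FA K n} {μ : Fin r × FreeMonoid (Fin n)} :
    μ ∈ suppF v ↔ coef v μ ≠ 0 := by
  rcases μ with ⟨i, w⟩
  simp only [suppF, Finset.mem_biUnion, Finset.mem_univ, true_and, Finset.mem_image,
    Finsupp.mem_support_iff, coef, Prod.mk.injEq]
  constructor
  · rintro ⟨i', w', hw', rfl, rfl⟩; exact hw'
  · intro h; exact ⟨i, w, h, rfl, rfl⟩

lemma suppF_nonempty {v : Fin r → FA K n} (hv : v ≠ 0) : (suppF v).Nonempty := by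
  rw [Finset.nonempty_iff_ne_empty]
  intro h
  apply hv
  apply ext_coef
  intro μ
  rw [coef_zero]
  by_contra hc
  have := mem_suppF.mpr hc
  rw [h] at this
  exact absurd this (Finset.notMem_empty μ)

lemma exists_max {X : Type*} {lt : X → X → Prop}
    (htrans : ∀ a b c, lt a b → lt b c → lt a c)
    (htrich : ∀ a b, lt a b ∨ a = b ∨ lt b a)
    (s : Finset X) : s.Nonempty → ∃ m ∈ s, ∀ x ∈ s, x = m ∨ lt x m := by
  classical
  induction s using Finset.induction_on with
  | empty => rintro ⟨x, hx⟩; exact absurd hx (Finset.notMem_empty x)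
  | @insert a t hat ih =>
    intro _
    rcases t.eq_empty_or_nonempty with rfl | ht
    · exact ⟨a, Finset.mem_insert_self a _, fun x hx => Or.inl (by simpa using hx)⟩
    · obtain ⟨m, hm, hmax⟩ := ih ht
      rcases htrich a m with h | h | h
      · refine ⟨m, Finset.mem_insert_of_mem hm, fun x hx => ?_⟩
        rcases Finset.mem_insert.mp hx with rfl | hx
        · exact Or.inr h
        · exact hmax x hx
      · subst h
        refine ⟨a, Finset.mem_insert_self a _, fun x hx => ?_⟩
        rcases Finset.mem_insert.mp hx with rfl | hx
        · exact Or.inl rfl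
        · exact hmax x hx
      · refine ⟨a, Finset.mem_insert_self a _, fun x hx => ?_⟩
        rcases Finset.mem_insert.mp hx with rfl | hx
        · exact Or.inl rfl
        · rcases hmax x hx with rfl | hlt
          · exact Or.inr h
          · exact Or.inr (htrans x m a hlt h)

def projL (K : Type) [Field K] {n r : ℕ} (δ : Fin r → (Fin n →₀ ℕ)) (α : Fin n →₀ ℕ) :
    (Fin r → FA K n) →ₗ[K] (Fin r → FA K n) where
  toFun v := fun i => MonoidAlgebra.ofCoeff ((v i).coeff.filter fun w => δ i + wdeg w = α)
  map_add' u v := by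
    funext i
    exact congrArg MonoidAlgebra.ofCoeff Finsupp.filter_add
  map_smul' c v := by
    funext i
    exact congrArg MonoidAlgebra.ofCoeff Finsupp.filter_smul

lemma coef_projL (δ : Fin r → (Fin n →₀ ℕ)) (α : Fin n →₀ ℕ) (v : Fin r → FA K n)
    (μ : Fin r × FreeMonoid (Fin n)) :
    coef (projL K δ α v) μ = if δ μ.1 + wdeg μ.2 = α then coef v μ else 0 := by
  rcases μ with ⟨i, w⟩
  simp only [coef, projL, LinearMap.coe_mk, AddHom.coe_mk, MonoidAlgebra.coeff_ofCoeff, Finsupp.filter_apply]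

lemma mem_freeComp_iff {δ : Fin r → (Fin n →₀ ℕ)} {α : Fin n →₀ ℕ} {v : Fin r → FA K n} :
    v ∈ freeComp K δ α ↔ ∀ μ : Fin r × FreeMonoid (Fin n),
      coef v μ ≠ 0 → δ μ.1 + wdeg μ.2 = α := by
  constructor
  · intro hv
    induction hv using Submodule.span_induction with
    | mem x hx =>
      obtain ⟨i, w, hdeg, rfl⟩ := hx
      intro μ hμ
      have : coef (E K (i, w)) μ ≠ 0 := hμ
      rw [coef_E] at this
      by_cases h : (i, w) = μ
      · subst h; exact hdeg
      · rw [if_neg h] at this; exact absurd rfl this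
    | zero => intro μ hμ; exact absurd (coef_zero μ) hμ
    | add x y _ _ hx hy =>
      intro μ hμ
      rw [coef_add] at hμ
      by_cases h : coef x μ = 0
      · exact hy μ (by intro h2; apply hμ; rw [h, h2, add_zero])
      · exact hx μ h
    | smul c x _ hx =>
      intro μ hμ
      rw [coef_smul] at hμ
      exact hx μ (right_ne_zero_of_mul hμ)
  · intro hv
    have hrep : v = ∑ i : Fin r, Pi.single i (v i) := (Finset.univ_sum_single v).symm
    rw [hrep]
    apply Submodule.sum_mem
    intro i _
    have hsingle : Pi.single i (v i) =
        (v i).coeff.sum fun w c => c • (Pi.single i (mono K w) : Fin r → FA K n) := by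
      have h0 : (Pi.single i (v i) : Fin r → FA K n)
          = LinearMap.single K (fun _ : Fin r => FA K n) i (v i) := rfl
      rw [h0]
      conv_lhs => rw [← MonoidAlgebra.sum_coeff_single (v i)]
      rw [map_finsuppSum]
      refine Finsupp.sum_congr fun w hw => ?_
      have h1 : MonoidAlgebra.single w ((v i).coeff w) = ((v i).coeff w) • mono K w := by
        rw [mono, MonoidAlgebra.of_apply, MonoidAlgebra.smul_single', mul_one]
      rw [h1, map_smul]
      rfl
    rw [hsingle]
    apply Submodule.finsuppSum_mem
    intro w hw
    apply Submodule.smul_mem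
    apply Submodule.subset_span
    exact ⟨i, w, hv (i, w) hw, rfl⟩

lemma projL_mem_comp (δ : Fin r → (Fin n →₀ ℕ)) (α : Fin n →₀ ℕ) (v : Fin r → FA K n) :
    projL K δ α v ∈ freeComp K δ α := by
  rw [mem_freeComp_iff]
  intro μ hμ
  rw [coef_projL] at hμ
  by_cases h : δ μ.1 + wdeg μ.2 = α
  · exact h
  · rw [if_neg h] at hμ; exact absurd rfl hμ

lemma projL_of_comp {δ : Fin r → (Fin n →₀ ℕ)} {α : Fin n →₀ ℕ} {v : Fin r → FA K n}
    (hv : v ∈ freeComp K δ α) : projL K δ α v = v := by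
  apply ext_coef
  intro μ
  rw [coef_projL]
  by_cases h : δ μ.1 + wdeg μ.2 = α
  · rw [if_pos h]
  · rw [if_neg h]
    by_contra hc
    exact h (mem_freeComp_iff.mp hv μ (fun h2 => hc h2.symm))

lemma projL_of_comp_ne {δ : Fin r → (Fin n →₀ ℕ)} {α β : Fin n →₀ ℕ} {v : Fin r → FA K n}
    (hv : v ∈ freeComp K δ β) (hne : β ≠ α) : projL K δ α v = 0 := by
  apply ext_coef
  intro μ
  rw [coef_projL, coef_zero]
  by_cases h : δ μ.1 + wdeg μ.2 = α
  · rw [if_pos h]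
    by_contra hc
    exact hne ((mem_freeComp_iff.mp hv μ hc).symm.trans h)
  · rw [if_neg h]

lemma projL_mem_M {δ : Fin r → (Fin n →₀ ℕ)} {M : Submodule K (Fin r → FA K n)}
    (hgraded : M = ⨆ α : Fin n →₀ ℕ, M ⊓ freeComp K δ α) (α : Fin n →₀ ℕ)
    {v : Fin r → FA K n} (hv : v ∈ M) : projL K δ α v ∈ M := by
  have h1 : Submodule.map (projL K δ α) (⨆ β : Fin n →₀ ℕ, M ⊓ freeComp K δ β) ≤ M := by
    rw [Submodule.map_iSup]
    apply iSup_le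
    intro β
    rintro x ⟨y, hy, rfl⟩
    rcases eq_or_ne β α with rfl | hne
    · rw [projL_of_comp hy.2]; exact hy.1
    · rw [projL_of_comp_ne hy.2 hne]; exact M.zero_mem
  exact h1 ⟨v, hgraded ▸ hv, rfl⟩

def rmul (K : Type) [Field K] {n r : ℕ} (t : FreeMonoid (Fin n)) :
    (Fin r → FA K n) →ₗ[K] (Fin r → FA K n) where
  toFun v := fun i => v i * mono K t
  map_add' u v := by funext i; exact add_mul _ _ _
  map_smul' c v := by funext i; exact smul_mul_assoc c _ _

lemma coef_rmul_mul (t : FreeMonoid (Fin n)) (v : Fin r → FA K n)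
    (μ : Fin r × FreeMonoid (Fin n)) :
    coef (rmul K t v) (μ.1, μ.2 * t) = coef v μ := by
  rcases μ with ⟨i, w⟩
  simp only [coef, rmul, LinearMap.coe_mk, AddHom.coe_mk]
  have := MonoidAlgebra.coeff_mul_single_eq_coeff_mul (x := v i) (r := (1 : K)) (m := t)
    (m₁ := w * t) w (fun a _ => mul_left_inj t)
  rw [mono, MonoidAlgebra.of_apply]
  rw [this, mul_one]

lemma coef_rmul_ne (t : FreeMonoid (Fin n)) (v : Fin r → FA K n)
    (ν : Fin r × FreeMonoid (Fin n)) (h : ¬ ∃ a, ν.2 = a * t) :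
    coef (rmul K t v) ν = 0 := by
  rcases ν with ⟨i, s⟩
  simp only [coef, rmul, LinearMap.coe_mk, AddHom.coe_mk]
  rw [mono, MonoidAlgebra.of_apply]
  exact MonoidAlgebra.mul_single_apply_of_not_exists_mul 1 (v i) h

lemma E_mem_comp {δ : Fin r → (Fin n →₀ ℕ)} {α : Fin n →₀ ℕ}
    {μ : Fin r × FreeMonoid (Fin n)} (h : δ μ.1 + wdeg μ.2 = α) :
    E K μ ∈ freeComp K δ α :=
  Submodule.subset_span ⟨μ.1, μ.2, h, rfl⟩

variable {δ : Fin r → (Fin n →₀ ℕ)} {M : Submodule K (Fin r → FA K n)}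
  {lt : (Fin r × FreeMonoid (Fin n)) → (Fin r × FreeMonoid (Fin n)) → Prop}
  {Li : Fin r → Set (FreeMonoid (Fin n))}

lemma spanning
    (hright : ∀ v ∈ M, ∀ w : FreeMonoid (Fin n), (fun c => v c * mono K w) ∈ M)
    (hgraded : M = ⨆ α : Fin n →₀ ℕ, M ⊓ freeComp K δ α)
    (htrans : ∀ a b c, lt a b → lt b c → lt a c)
    (htrich : ∀ a b, lt a b ∨ a = b ∨ lt b a)
    (hwf : WellFounded lt)
    (hcomp : ∀ (i j : Fin r) (u v w : FreeMonoid (Fin n)),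
      lt (i, u) (j, v) → lt (i, u * w) (j, v * w))
    (hLi : ∀ i, Li i = {w | ∃ w₀ t, isLM lt M (i, w₀) ∧ w = w₀ * t})
    (α : Fin n →₀ ℕ) :
    freeComp K δ α ≤ M ⊔ Submodule.span K
      (E K '' {μ : Fin r × FreeMonoid (Fin n) | δ μ.1 + wdeg μ.2 = α ∧ μ.2 ∉ Li μ.1}) := by
  set S := M ⊔ Submodule.span K
      (E K '' {μ : Fin r × FreeMonoid (Fin n) | δ μ.1 + wdeg μ.2 = α ∧ μ.2 ∉ Li μ.1}) with hS
  have main : ∀ μ0 : Fin r × FreeMonoid (Fin n), ∀ v, v ∈ freeComp K δ α →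
      (∀ ν, coef v ν ≠ 0 → ν = μ0 ∨ lt ν μ0) → v ∈ S := by
    intro μ0
    refine hwf.induction
      (C := fun μ => ∀ v, v ∈ freeComp K δ α →
        (∀ ν, coef v ν ≠ 0 → ν = μ ∨ lt ν μ) → v ∈ S) μ0 ?_
    intro μ ih v hvcomp hbound
    have hsmall : ∀ u, u ∈ freeComp K δ α → (∀ ν, coef u ν ≠ 0 → lt ν μ) → u ∈ S := by
      intro u hu hub
      rcases eq_or_ne u 0 with rfl | hu0
      · exact S.zero_mem
      · obtain ⟨m, hm, hmax⟩ := exists_max htrans htrich _ (suppF_nonempty hu0)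
        exact ih m (hub m (mem_suppF.mp hm)) u hu
          (fun ν hν => hmax ν (mem_suppF.mpr hν))
    by_cases hμ0 : coef v μ = 0
    · refine hsmall v hvcomp (fun ν hν => ?_)
      rcases hbound ν hν with rfl | h
      · exact absurd hμ0 hν
      · exact h
    · have hdeg : δ μ.1 + wdeg μ.2 = α := mem_freeComp_iff.mp hvcomp μ hμ0
      by_cases hLμ : μ.2 ∈ Li μ.1
      · -- leading monomial case : reduce modulo M
        rw [hLi μ.1] at hLμ
        obtain ⟨w₀, t, hlm, hwt⟩ := hLμ
        obtain ⟨u, huM, hu0, hub⟩ := hlm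
        set β := δ μ.1 + wdeg w₀ with hβ
        set u1 := projL K δ β u with hu1def
        have hu1M : u1 ∈ M := projL_mem_M hgraded β huM
        have hu1comp : u1 ∈ freeComp K δ β := projL_mem_comp δ β u
        have hu1c : coef u1 (μ.1, w₀) ≠ 0 := by
          rw [hu1def, coef_projL, if_pos rfl]
          exact hu0
        have hu1b : ∀ ν, coef u1 ν ≠ 0 → ν = (μ.1, w₀) ∨ lt ν (μ.1, w₀) := by
          intro ν hν
          apply hub
          rw [hu1def, coef_projL] at hν
          by_cases h : δ ν.1 + wdeg ν.2 = β
          · rwa [if_pos h] at hν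
          · rw [if_neg h] at hν; exact absurd rfl hν
        set u2 := rmul K t u1 with hu2def
        have hu2M : u2 ∈ M := hright u1 hu1M t
        have hμeq : μ = (μ.1, w₀ * t) := by
          rw [← hwt]
        have hu2c : coef u2 μ ≠ 0 := by
          rw [hμeq]
          rw [hu2def]
          have := coef_rmul_mul (K := K) t u1 (μ.1, w₀)
          rw [this]
          exact hu1c
        have hu2b : ∀ ν, coef u2 ν ≠ 0 → ν = μ ∨ lt ν μ := by
          intro ν hν
          by_cases hex : ∃ a, ν.2 = a * t
          · obtain ⟨a, ha⟩ := hex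
            have hνeq : ν = (ν.1, a * t) := by rw [← ha]
            have h1 : coef u1 (ν.1, a) ≠ 0 := by
              rw [hνeq, hu2def] at hν
              rwa [coef_rmul_mul (K := K) t u1 (ν.1, a)] at hν
            rcases hu1b (ν.1, a) h1 with he | hlt
            · left
              rw [hνeq, hμeq]
              rw [Prod.mk.injEq] at he ⊢
              exact ⟨he.1, by rw [he.2]⟩
            · right
              rw [hνeq, hμeq]
              exact hcomp ν.1 μ.1 a w₀ t hlt
          · rw [hu2def] at hν
            exact absurd (coef_rmul_ne t u1 ν hex) hν
        have hu2comp : u2 ∈ freeComp K δ α := by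
          rw [mem_freeComp_iff]
          intro ν hν
          by_cases hex : ∃ a, ν.2 = a * t
          · obtain ⟨a, ha⟩ := hex
            have hνeq : ν = (ν.1, a * t) := by rw [← ha]
            have h1 : coef u1 (ν.1, a) ≠ 0 := by
              rw [hνeq, hu2def] at hν
              rwa [coef_rmul_mul (K := K) t u1 (ν.1, a)] at hν
            have h2 : δ ν.1 + wdeg a = β := mem_freeComp_iff.mp hu1comp (ν.1, a) h1
            rw [hνeq]
            show δ ν.1 + wdeg (a * t) = α
            rw [wdeg_mul, ← add_assoc, h2, hβ]
            rw [add_assoc, ← wdeg_mul, ← hwt, hdeg]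
          · rw [hu2def] at hν
            exact absurd (coef_rmul_ne t u1 ν hex) hν
        set c := coef v μ / coef u2 μ with hc
        have hsub : v - c • u2 ∈ S := by
          apply hsmall
          · exact Submodule.sub_mem _ hvcomp (Submodule.smul_mem _ c hu2comp)
          · intro ν hν
            rw [coef_sub, coef_smul] at hν
            have hν' : ν = μ ∨ lt ν μ := by
              by_cases h1 : coef v ν = 0
              · rw [h1, zero_sub, neg_ne_zero] at hν
                exact hu2b ν (right_ne_zero_of_mul hν)
              · exact hbound ν h1
            rcases hν' with rfl | h
            · exfalso
              apply hν
              rw [hc, div_mul_cancel₀ _ hu2c, sub_self]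
            · exact h
        have hvv : v = (v - c • u2) + c • u2 := by abel
        rw [hvv]
        exact S.add_mem hsub (S.smul_mem c (Submodule.mem_sup_left hu2M))
      · -- standard monomial case
        have hsub : v - coef v μ • E K μ ∈ S := by
          apply hsmall
          · exact Submodule.sub_mem _ hvcomp
              (Submodule.smul_mem _ _ (E_mem_comp hdeg))
          · intro ν hν
            rw [coef_sub, coef_smul, coef_E] at hν
            have hν' : ν = μ ∨ lt ν μ := by
              by_cases h1 : coef v ν = 0
              · rw [h1, zero_sub, neg_ne_zero] at hν
                by_cases h2 : μ = ν
                · exact Or.inl h2.symm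
                · rw [if_neg h2, mul_zero] at hν; exact absurd rfl hν
              · exact hbound ν h1
            rcases hν' with rfl | h
            · exfalso
              apply hν
              rw [if_pos rfl, mul_one, sub_self]
            · exact h
        have hE : E K μ ∈ S := Submodule.mem_sup_right
          (Submodule.subset_span ⟨μ, ⟨hdeg, hLμ⟩, rfl⟩)
        have hvv : v = (v - coef v μ • E K μ) + coef v μ • E K μ := by abel
        rw [hvv]
        exact S.add_mem hsub (S.smul_mem _ hE)
  rw [freeComp, Submodule.span_le]
  rintro x ⟨i, w, hdeg, rfl⟩
  refine main (i, w) _ (Submodule.subset_span ⟨i, w, hdeg, rfl⟩) (fun ν hν => Or.inl ?_)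
  have : coef (E K (i, w)) ν ≠ 0 := hν
  rw [coef_E] at this
  by_cases h : (i, w) = ν
  · exact h.symm
  · rw [if_neg h] at this; exact absurd rfl this


lemma finite_B (δ : Fin r → (Fin n →₀ ℕ)) (Li : Fin r → Set (FreeMonoid (Fin n)))
    (α : Fin n →₀ ℕ) :
    ({μ : Fin r × FreeMonoid (Fin n) | δ μ.1 + wdeg μ.2 = α ∧ μ.2 ∉ Li μ.1}).Finite := by
  apply Set.Finite.subset
    (Set.finite_iUnion (fun i : Fin r => ((finite_wdeg_eq (α - δ i)).image (Prod.mk i))))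
  rintro ⟨i, w⟩ ⟨hdeg, -⟩
  exact Set.mem_iUnion.mpr ⟨i, ⟨w, eq_tsub_of_add_eq (by rw [add_comm]; exact hdeg), rfl⟩⟩

lemma quotient_eq_span
    (hright : ∀ v ∈ M, ∀ w : FreeMonoid (Fin n), (fun c => v c * mono K w) ∈ M)
    (hgraded : M = ⨆ α : Fin n →₀ ℕ, M ⊓ freeComp K δ α)
    (htrans : ∀ a b c, lt a b → lt b c → lt a c)
    (htrich : ∀ a b, lt a b ∨ a = b ∨ lt b a)
    (hwf : WellFounded lt)
    (hcomp : ∀ (i j : Fin r) (u v w : FreeMonoid (Fin n)),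
      lt (i, u) (j, v) → lt (i, u * w) (j, v * w))
    (hLi : ∀ i, Li i = {w | ∃ w₀ t, isLM lt M (i, w₀) ∧ w = w₀ * t})
    (α : Fin n →₀ ℕ) :
    Submodule.map M.mkQ (freeComp K δ α) = Submodule.span K
      (M.mkQ '' (E K '' {μ : Fin r × FreeMonoid (Fin n) |
        δ μ.1 + wdeg μ.2 = α ∧ μ.2 ∉ Li μ.1})) := by
  apply le_antisymm
  · refine le_trans (Submodule.map_mono
      (spanning hright hgraded htrans htrich hwf hcomp hLi α)) ?_
    rw [Submodule.map_sup, Submodule.map_span]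
    have h1 : Submodule.map M.mkQ M = ⊥ := by
      rw [Submodule.eq_bot_iff]
      rintro x ⟨m, hm, rfl⟩
      rw [Submodule.mkQ_apply, Submodule.Quotient.mk_eq_zero]
      exact hm
    rw [h1, bot_sup_eq]
  · rw [Submodule.span_le]
    rintro x ⟨y, ⟨μ, hμ, rfl⟩, rfl⟩
    exact ⟨E K μ, E_mem_comp hμ.1, rfl⟩

lemma coef_sum {ι : Type*} (s : Finset ι) (f : ι → (Fin r → FA K n))
    (ν : Fin r × FreeMonoid (Fin n)) :
    coef (∑ k ∈ s, f k) ν = ∑ k ∈ s, coef (f k) ν := by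
  classical
  induction s using Finset.induction_on with
  | empty => simp [coef_zero]
  | @insert a t hat ih => rw [Finset.sum_insert hat, Finset.sum_insert hat, coef_add, ih]

lemma independent
    (htrans : ∀ a b c, lt a b → lt b c → lt a c)
    (htrich : ∀ a b, lt a b ∨ a = b ∨ lt b a)
    (hLi : ∀ i, Li i = {w | ∃ w₀ t, isLM lt M (i, w₀) ∧ w = w₀ * t})
    (α : Fin n →₀ ℕ) :
    LinearIndependent K (fun μ : {μ : Fin r × FreeMonoid (Fin n) //
        δ μ.1 + wdeg μ.2 = α ∧ μ.2 ∉ Li μ.1} => M.mkQ (E K μ.val)) := by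
  rw [linearIndependent_iff]
  intro l hl
  by_contra hl0
  set u : Fin r → FA K n := ∑ μ ∈ l.support, l μ • E K μ.val with hu
  have hmk : M.mkQ u = 0 := by
    rw [hu, map_sum]
    rw [← hl, Finsupp.linearCombination_apply, Finsupp.sum]
    exact Finset.sum_congr rfl fun μ _ => map_smul _ _ _
  have huM : u ∈ M := by
    rwa [Submodule.mkQ_apply, Submodule.Quotient.mk_eq_zero] at hmk
  have hcoef : ∀ ν, coef u ν = ∑ μ ∈ l.support, (if μ.val = ν then l μ else 0) := by
    intro ν
    rw [hu, coef_sum]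
    refine Finset.sum_congr rfl fun μ _ => ?_
    rw [coef_smul, coef_E]
    split_ifs <;> simp
  have hcoef2 : ∀ μ0 : {μ : Fin r × FreeMonoid (Fin n) //
      δ μ.1 + wdeg μ.2 = α ∧ μ.2 ∉ Li μ.1}, coef u μ0.val = l μ0 := by
    intro μ0
    rw [hcoef μ0.val]
    have : ∀ μ ∈ l.support, (if μ.val = μ0.val then l μ else 0)
        = (if μ = μ0 then l μ else 0) := by
      intro μ _
      congr 1
      simp [Subtype.ext_iff]
    rw [Finset.sum_congr rfl this, Finset.sum_ite_eq' l.support μ0 (fun μ => l μ)]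
    split_ifs with h
    · rfl
    · exact (Finsupp.notMem_support_iff.mp h).symm
  have hsupp : ∀ ν, coef u ν ≠ 0 → ν ∈ {μ : Fin r × FreeMonoid (Fin n) |
      δ μ.1 + wdeg μ.2 = α ∧ μ.2 ∉ Li μ.1} := by
    intro ν hν
    rw [hcoef ν] at hν
    obtain ⟨μ, -, hμ⟩ := Finset.exists_ne_zero_of_sum_ne_zero hν
    have : μ.val = ν := by
      by_contra h
      rw [if_neg h] at hμ
      exact hμ rfl
    exact this ▸ μ.2
  obtain ⟨μ0, hμ0⟩ := Finsupp.support_nonempty_iff.mpr hl0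
  have hu0 : u ≠ 0 := by
    intro h
    apply Finsupp.mem_support_iff.mp hμ0
    rw [← hcoef2 μ0, h, coef_zero]
  obtain ⟨m, hm, hmax⟩ := exists_max htrans htrich _ (suppF_nonempty hu0)
  have hmc : coef u m ≠ 0 := mem_suppF.mp hm
  have hmB := hsupp m hmc
  have hLM : isLM lt M m :=
    ⟨u, huM, hmc, fun ν hν => hmax ν (mem_suppF.mpr hν)⟩
  apply hmB.2
  rw [hLi m.1]
  exact ⟨m.2, 1, by rwa [Prod.mk.eta], (mul_one m.2).symm⟩

lemma finrank_eq
    (hright : ∀ v ∈ M, ∀ w : FreeMonoid (Fin n), (fun c => v c * mono K w) ∈ M)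
    (hgraded : M = ⨆ α : Fin n →₀ ℕ, M ⊓ freeComp K δ α)
    (htrans : ∀ a b c, lt a b → lt b c → lt a c)
    (htrich : ∀ a b, lt a b ∨ a = b ∨ lt b a)
    (hwf : WellFounded lt)
    (hcomp : ∀ (i j : Fin r) (u v w : FreeMonoid (Fin n)),
      lt (i, u) (j, v) → lt (i, u * w) (j, v * w))
    (hLi : ∀ i, Li i = {w | ∃ w₀ t, isLM lt M (i, w₀) ∧ w = w₀ * t})
    (α : Fin n →₀ ℕ) :
    Module.finrank K (Submodule.map M.mkQ (freeComp K δ α))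
      = Set.ncard {μ : Fin r × FreeMonoid (Fin n) |
          δ μ.1 + wdeg μ.2 = α ∧ μ.2 ∉ Li μ.1} := by
  haveI : Fintype {μ : Fin r × FreeMonoid (Fin n) //
      δ μ.1 + wdeg μ.2 = α ∧ μ.2 ∉ Li μ.1} := (finite_B δ Li α).fintype
  haveI : Fintype ↥{μ : Fin r × FreeMonoid (Fin n) |
      δ μ.1 + wdeg μ.2 = α ∧ μ.2 ∉ Li μ.1} := (finite_B δ Li α).fintype
  rw [quotient_eq_span hright hgraded htrans htrich hwf hcomp hLi α]
  have hrange : M.mkQ '' (E K '' {μ : Fin r × FreeMonoid (Fin n) |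
      δ μ.1 + wdeg μ.2 = α ∧ μ.2 ∉ Li μ.1})
      = Set.range (fun μ : {μ : Fin r × FreeMonoid (Fin n) //
          δ μ.1 + wdeg μ.2 = α ∧ μ.2 ∉ Li μ.1} => M.mkQ (E K μ.val)) := by
    rw [Set.image_image, Set.image_eq_range]
    rfl
  rw [hrange, finrank_span_eq_card (independent htrans htrich hLi α)]
  rw [← Nat.card_coe_set_eq, Nat.card_eq_fintype_card]
  exact Fintype.card_congr (Equiv.refl _)

lemma ncard_B (δ : Fin r → (Fin n →₀ ℕ)) (Li : Fin r → Set (FreeMonoid (Fin n)))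
    (α : Fin n →₀ ℕ) :
    ({μ : Fin r × FreeMonoid (Fin n) | δ μ.1 + wdeg μ.2 = α ∧ μ.2 ∉ Li μ.1}).ncard
      = ∑ i : Fin r, (if δ i ≤ α then cnt (Li i) (α - δ i) else 0) := by
  classical
  set V : Fin r → Set (FreeMonoid (Fin n)) := fun i =>
    {w | wdeg w = α - δ i ∧ δ i ≤ α ∧ w ∉ Li i} with hV
  have finV : ∀ i, (V i).Finite := fun i =>
    (finite_wdeg_eq (α - δ i)).subset (fun v hv => hv.1)
  have key : (finite_B δ Li α).toFinset
      = Finset.univ.biUnion (fun i => ((finV i).toFinset).image (Prod.mk i)) := by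
    ext μ
    rcases μ with ⟨i, w⟩
    simp only [Set.Finite.mem_toFinset, Set.mem_setOf_eq, Finset.mem_biUnion,
      Finset.mem_univ, true_and, Finset.mem_image, Prod.mk.injEq]
    constructor
    · rintro ⟨hdeg, hns⟩
      refine ⟨i, w, ?_, rfl, rfl⟩
      have hle : δ i ≤ α := hdeg ▸ self_le_add_right (δ i) (wdeg w)
      exact ⟨eq_tsub_of_add_eq (by rw [add_comm]; exact hdeg), hle, hns⟩
    · rintro ⟨i', w', hw', rfl, rfl⟩
      obtain ⟨hdeg, hle, hns⟩ := hw'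
      exact ⟨by rw [hdeg, add_tsub_cancel_of_le hle], hns⟩
  have hdisj : ∀ i ∈ Finset.univ, ∀ i' ∈ Finset.univ, i ≠ i' →
      Disjoint (((finV i).toFinset).image (Prod.mk i))
        (((finV i').toFinset).image (Prod.mk i')) := by
    intro i _ i' _ hii
    rw [Finset.disjoint_left]
    rintro μ hμ hμ'
    simp only [Finset.mem_image] at hμ hμ'
    obtain ⟨v, -, rfl⟩ := hμ
    obtain ⟨v', -, he⟩ := hμ'
    exact hii (congrArg Prod.fst he).symm
  have hcard := congrArg Finset.card key
  rw [Finset.card_biUnion hdisj] at hcard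
  rw [Set.ncard_eq_toFinset_card _ (finite_B δ Li α), hcard]
  refine Finset.sum_congr rfl (fun i _ => ?_)
  rw [Finset.card_image_of_injective _ (fun a b h => congrArg Prod.snd h)]
  split_ifs with hle
  · rw [cnt, Set.ncard_eq_toFinset_card _
      ((finite_wdeg_eq (α - δ i)).subset (fun v hv => hv.1))]
    congr 1
    ext v
    simp only [Set.Finite.mem_toFinset, Set.mem_setOf_eq, hV]
    tauto
  · rw [Finset.card_eq_zero, ← Finset.not_nonempty_iff_eq_empty]
    rintro ⟨v, hv⟩
    simp only [Set.Finite.mem_toFinset, Set.mem_setOf_eq, hV] at hv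
    exact hle hv.2.1

end Stmt9

/-- if, for a finitely generated multigraded right module
N = ⊕_i F[−δ_i]/M and a monomial ordering, each language
L_i = I_i ∩ W (where LM(M) = ⊕_i e_i I_i) has finite orbit under the colon
operators, then HS(N) is a rational function with integer coefficients. -/
theorem stmt_9 (K : Type) [Field K] (n r : ℕ) (hn : 1 ≤ n)
    (δ : Fin r → (Fin n →₀ ℕ))
    (M : Submodule K (Fin r → FA K n))
    -- M is a right F-submodule
    (hright : ∀ v ∈ M, ∀ w : FreeMonoid (Fin n), (fun c => v c * mono K w) ∈ M)
    -- M is multigraded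
    (hgraded : M = ⨆ α : Fin n →₀ ℕ, M ⊓ freeComp K δ α)
    -- lt is a monomial ordering
    (lt : (Fin r × FreeMonoid (Fin n)) → (Fin r × FreeMonoid (Fin n)) → Prop)
    (hirr : ∀ μ, ¬ lt μ μ)
    (htrans : ∀ a b c, lt a b → lt b c → lt a c)
    (htrich : ∀ a b, lt a b ∨ a = b ∨ lt b a)
    (hwf : WellFounded lt)
    (hcomp : ∀ (i j : Fin r) (u v w : FreeMonoid (Fin n)),
      lt (i, u) (j, v) → lt (i, u * w) (j, v * w))
    -- L_i = I_i ∩ W, where LM(M) = ⊕_i e_i I_i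
    (Li : Fin r → Set (FreeMonoid (Fin n)))
    (hLi : ∀ i, Li i = {w | ∃ w₀ t, isLM lt M (i, w₀) ∧ w = w₀ * t})
    -- each I_i is regular: the orbit of L_i under the colon operators is finite
    (horb : ∀ i, Set.Finite
      {Lc : Set (FreeMonoid (Fin n)) | ∃ w, Lc = {v | w * v ∈ Li i}})
    -- H is the multigraded Hilbert series of N
    (H : MvPowerSeries (Fin n) ℤ)
    (hH : ∀ α : Fin n →₀ ℕ, MvPowerSeries.coeff α H =
      (Module.finrank K (Submodule.map M.mkQ (freeComp K δ α)) : ℤ)) :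
    ∃ p q : MvPolynomial (Fin n) ℤ, MvPolynomial.coeff 0 q = 1 ∧
      (q : MvPowerSeries (Fin n) ℤ) * H = (p : MvPowerSeries (Fin n) ℤ) := by
  have hHeq : H = ∑ i : Fin r,
      ((MvPolynomial.monomial (δ i) (1 : ℤ) : MvPolynomial (Fin n) ℤ) :
        MvPowerSeries (Fin n) ℤ) * Stmt9.g (Li i) := by
    ext α
    rw [hH α, map_sum]
    rw [Stmt9.finrank_eq hright hgraded htrans htrich hwf hcomp hLi α,
      Stmt9.ncard_B δ Li α]
    push_cast
    refine Finset.sum_congr rfl fun i _ => ?_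
    rw [MvPowerSeries.coeff_monomial_mul, Stmt9.coeff_g]
    split_ifs <;> simp
  exact Stmt9.rational_H δ Li horb H hHeq
end
end

section
/- Let I ⊆ F be the two-sided ideal generated by a set of words {w_j}_{j∈J} ⊆ W (so I ∩ W = W·{w_j}·W), and let w ∈ W with w ∉ I. For each j, let R(w, w_j) ⊆ F be the right ideal generated by all words v ∈ W such that tdeg(v) < tdeg(w_j) and u·w_j = w·v for some u ∈ W. Then (I :_R w) = Σ_j R(w, w_j) + I, where (I :_R w) = {f ∈ F : w f ∈ I}. -/
noncomputable section

/-- for a monomial two-sided ideal I generated by words {w_j}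
and a word w ∉ I, the colon right ideal (I :_R w) equals Σ_j R(w, w_j) + I,
where R(w, w_j) is the right ideal generated by the words v with
tdeg(v) < tdeg(w_j) and u·w_j = w·v for some word u. -/
theorem stmt_11 (K : Type) [Field K] (n : ℕ) (hn : 1 ≤ n)
    (S : Set (FreeMonoid (Fin n)))
    (I : Submodule K (FA K n))
    -- I is the two-sided ideal generated by the words of S, so
    -- I ∩ W = W·S·W and I is the K-span of that language
    (hI : I = Submodule.span K
      {f | ∃ s ∈ S, ∃ u v : FreeMonoid (Fin n), f = mono K (u * s * v)})
    (w : FreeMonoid (Fin n)) (hw : mono K w ∉ I) :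
    Submodule.comap (LinearMap.mulLeft K (mono K w)) I =
      (⨆ s ∈ S, Submodule.span K
        {f | ∃ v : FreeMonoid (Fin n),
          ((FreeMonoid.toList v).length < (FreeMonoid.toList s).length ∧
            ∃ u : FreeMonoid (Fin n), u * s = w * v) ∧
          ∃ t : FreeMonoid (Fin n), f = mono K (v * t)}) ⊔ I := by
  classical
  set T : Set (FreeMonoid (Fin n)) :=
    {m | ∃ s ∈ S, ∃ u v : FreeMonoid (Fin n), m = u * s * v} with hT
  have hgen : {f | ∃ s ∈ S, ∃ u v : FreeMonoid (Fin n), f = mono K (u * s * v)}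
      = (fun m => MonoidAlgebra.single m (1 : K)) '' T := by
    ext f
    constructor
    · rintro ⟨s, hs, u, v, rfl⟩
      exact ⟨u * s * v, ⟨s, hs, u, v, rfl⟩, rfl⟩
    · rintro ⟨m, ⟨s, hs, u, v, rfl⟩, rfl⟩
      exact ⟨s, hs, u, v, rfl⟩
  have hIsupp : ∀ f : FA K n, f ∈ I ↔ ↑f.coeff.support ⊆ T := by
    intro f
    rw [hI, hgen, ← MonoidAlgebra.supported_eq_span_single, MonoidAlgebra.mem_supported]
  have hmono_mem : ∀ m, m ∈ T → mono K m ∈ I := by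
    intro m hm
    rw [hIsupp]
    intro x hx
    have : x = m := by
      simpa [mono, MonoidAlgebra.of_apply, MonoidAlgebra.coeff_single,
        Finsupp.support_single_ne_zero m (one_ne_zero (α := K))] using hx
    rwa [this]
  have hmulsupp : ∀ f : FA K n,
      ((mono K w * f).coeff.support : Set (FreeMonoid (Fin n))) = (w * ·) '' ↑f.coeff.support := by
    intro f
    have := MonoidAlgebra.support_coeff_single_mul f (1 : K) (fun y => by simp) w
    rw [mono, MonoidAlgebra.of_apply, this, Finset.coe_map]
    rfl
  apply le_antisymm
  · intro f hf
    rw [Submodule.mem_comap, LinearMap.mulLeft_apply, hIsupp] at hf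
    refine Submodule.span_le.mpr ?_ (MonoidAlgebra.mem_span_support_coeff f)
    rintro _ ⟨m, hm, rfl⟩
    have hmT : w * m ∈ T := hf (by rw [hmulsupp]; exact ⟨m, hm, rfl⟩)
    obtain ⟨s, hs, u, v', huv⟩ := hmT
    have hl : w.toList ++ m.toList = (u.toList ++ s.toList) ++ v'.toList := by
      simpa [FreeMonoid.toList_mul] using congrArg FreeMonoid.toList huv
    have hpw : w.toList <+: w.toList ++ m.toList := List.prefix_append _ _
    have hpus : u.toList ++ s.toList <+: w.toList ++ m.toList := by
      rw [hl]; exact List.prefix_append _ _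
    rcases le_or_gt w.toList.length u.toList.length with h2 | h1
    · -- s occurs inside m : m ∈ I
      have hpu : u.toList <+: w.toList ++ m.toList :=
        (List.prefix_append _ _).trans hpus
      obtain ⟨u₁, hu₁⟩ := List.prefix_of_prefix_length_le hpw hpu h2
      have hm' : m = FreeMonoid.ofList u₁ * s * v' := by
        apply FreeMonoid.toList.injective
        have : w.toList ++ m.toList = w.toList ++ (u₁ ++ s.toList ++ v'.toList) := by
          rw [hl, ← hu₁]; simp [List.append_assoc]
        have := List.append_cancel_left this
        simpa [FreeMonoid.toList_mul] using this
      exact Submodule.mem_sup_right (hmono_mem m ⟨s, hs, FreeMonoid.ofList u₁, v', hm'⟩)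
    · rcases le_or_gt (u.toList.length + s.toList.length) w.toList.length with h4 | h3
      · -- s occurs inside w : contradiction with hw
        exfalso
        obtain ⟨r, hr⟩ := List.prefix_of_prefix_length_le hpus hpw (by simpa using h4)
        refine hw (hmono_mem w ⟨s, hs, u, FreeMonoid.ofList r, ?_⟩)
        apply FreeMonoid.toList.injective
        simp [FreeMonoid.toList_mul, ← hr]
      · -- straddling case
        obtain ⟨vl, hvl⟩ := List.prefix_of_prefix_length_le hpw hpus (by simpa using h3.le)
        set v : FreeMonoid (Fin n) := FreeMonoid.ofList vl with hv
        have hus : u * s = w * v := by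
          apply FreeMonoid.toList.injective
          simp [FreeMonoid.toList_mul, hv, ← hvl]
        have hlen : (FreeMonoid.toList v).length < (FreeMonoid.toList s).length := by
          have := congrArg List.length hvl
          simp only [List.length_append] at this
          simp only [hv, FreeMonoid.toList_ofList]
          omega
        have hm' : m = v * v' := by
          apply FreeMonoid.toList.injective
          have : w.toList ++ m.toList = w.toList ++ (vl ++ v'.toList) := by
            rw [hl, ← hvl]; simp [List.append_assoc]
          have := List.append_cancel_left this
          simpa [FreeMonoid.toList_mul, hv] using this
        have hmem : mono K m ∈ Submodule.span K
            {f | ∃ v : FreeMonoid (Fin n),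
              ((FreeMonoid.toList v).length < (FreeMonoid.toList s).length ∧
                ∃ u : FreeMonoid (Fin n), u * s = w * v) ∧
              ∃ t : FreeMonoid (Fin n), f = mono K (v * t)} :=
          Submodule.subset_span ⟨v, ⟨hlen, u, hus⟩, v', by rw [hm']⟩
        exact Submodule.mem_sup_left
          (Submodule.mem_iSup_of_mem s (Submodule.mem_iSup_of_mem hs hmem))
  · refine sup_le ?_ ?_
    · refine iSup_le fun s => iSup_le fun hs => Submodule.span_le.mpr ?_
      rintro f ⟨v, ⟨hlen, u, hus⟩, t, rfl⟩
      rw [SetLike.mem_coe, Submodule.mem_comap, LinearMap.mulLeft_apply]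
      have : mono K w * mono K (v * t) = mono K (u * s * t) := by
        rw [mono, mono, mono, ← map_mul, ← mul_assoc, ← hus]
      rw [this]
      exact hmono_mem _ ⟨s, hs, u, t, rfl⟩
    · intro f hf
      rw [Submodule.mem_comap, LinearMap.mulLeft_apply, hIsupp]
      rw [hIsupp] at hf
      intro x hx
      rw [hmulsupp] at hx
      obtain ⟨m, hm, rfl⟩ := hx
      obtain ⟨s, hs, u, v, rfl⟩ := hf hm
      exact ⟨s, hs, w * u, v, by simp [mul_assoc]⟩
end
end

section
/- Let L ⊊ W be a right-ideal language with finite orbit, and enumerate the members of its orbit different from W as L_1,…,L_{r−1} with L_1 = L (the reduced orbit). Define the reduced adjacency matrix Ā ∈ ℤ^{(r−1)×(r−1)} by Ā_{kl} = #{i ∈ {1,…,n} : (L_k : x_i) = L_l}. Then the complement W \ L is finite (i.e., the monomial cyclic right module F/I defined by L is finite-dimensional) if and only if Ā is a nilpotent matrix. -/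
open Classical

/-- a regular right-ideal language L ⊊ W has finite complement
iff the reduced adjacency matrix of its orbit is nilpotent. -/
theorem stmt_15 (n : ℕ) (hn : 1 ≤ n) (L : Set (List (Fin n)))
    (hL : ∀ w ∈ L, ∀ v, w ++ v ∈ L) (hLne : L ≠ Set.univ)
    (m : ℕ) (hm : 0 < m)
    (Ls : Fin m → Set (List (Fin n)))
    (hLs0 : Ls ⟨0, hm⟩ = L)
    (hmem : ∀ k, ∃ w : List (Fin n), Ls k = {v | w ++ v ∈ L})
    (hne : ∀ k, Ls k ≠ Set.univ)
    (hinj : Function.Injective Ls)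
    (hsurj : ∀ w : List (Fin n), {v : List (Fin n) | w ++ v ∈ L} ≠ Set.univ →
      ∃ k, {v : List (Fin n) | w ++ v ∈ L} = Ls k)
    (A : Matrix (Fin m) (Fin m) ℤ)
    (hA : ∀ k l, A k l =
      ((Finset.univ.filter (fun i : Fin n => {v | [i] ++ v ∈ Ls k} = Ls l)).card : ℤ)) :
    Set.Finite {w : List (Fin n) | w ∉ L} ↔ IsNilpotent A := by
  -- every one-letter quotient of a state is either univ or another state
  have hstep : ∀ (k : Fin m) (i : Fin n),
      {v | [i] ++ v ∈ Ls k} = Set.univ ∨ ∃ j, {v | [i] ++ v ∈ Ls k} = Ls j := by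
    intro k i
    obtain ⟨w, hw⟩ := hmem k
    have h1 : {v | [i] ++ v ∈ Ls k} = {v | (w ++ [i]) ++ v ∈ L} := by
      ext v; simp [hw, List.append_assoc]
    by_cases h : {v : List (Fin n) | (w ++ [i]) ++ v ∈ L} = Set.univ
    · left; rw [h1, h]
    · right; obtain ⟨j, hj⟩ := hsurj _ h; exact ⟨j, h1.trans hj⟩
  -- key counting lemma
  have key : ∀ (p : ℕ) (k l : Fin m), (A ^ p) k l =
      ((Finset.univ.filter (fun f : Fin p → Fin n =>
        {v | List.ofFn f ++ v ∈ Ls k} = Ls l)).card : ℤ) := by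
    intro p
    induction p with
    | zero =>
      intro k l
      rw [pow_zero, Matrix.one_apply]
      by_cases h : k = l
      · subst h
        simp [List.ofFn_zero, Set.setOf_mem_eq]
      · have h2 : Ls k ≠ Ls l := fun e => h (hinj e)
        simp [h, List.ofFn_zero, Set.setOf_mem_eq, h2]
    | succ p ih =>
      intro k l
      rw [pow_succ', Matrix.mul_apply]
      -- rewrite LHS sum
      have hL1 : ∀ j : Fin m, A k j * (A ^ p) j l =
          ((Finset.univ.filter (fun i : Fin n => {v | [i] ++ v ∈ Ls k} = Ls j)).card : ℤ) *
          ((Finset.univ.filter (fun f : Fin p → Fin n =>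
            {v | List.ofFn f ++ v ∈ Ls j} = Ls l)).card : ℤ) := by
        intro j; rw [hA, ih]
      rw [Finset.sum_congr rfl (fun j _ => hL1 j)]
      -- express RHS card as a double sum
      have hcons : ∀ (i : Fin n) (f : Fin p → Fin n),
          ({v | List.ofFn (Fin.cons i f) ++ v ∈ Ls k} = Ls l) ↔
          ({v | List.ofFn f ++ v ∈ {v' | [i] ++ v' ∈ Ls k}} = Ls l) := by
        intro i f
        have : {v | List.ofFn (Fin.cons i f) ++ v ∈ Ls k}
             = {v | List.ofFn f ++ v ∈ {v' | [i] ++ v' ∈ Ls k}} := by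
          ext v; simp [List.ofFn_succ]
        rw [this]
      have hcard : ((Finset.univ.filter (fun f : Fin (p+1) → Fin n =>
          {v | List.ofFn f ++ v ∈ Ls k} = Ls l)).card : ℤ) =
          ∑ i : Fin n, ((Finset.univ.filter (fun f : Fin p → Fin n =>
            {v | List.ofFn f ++ v ∈ {v' | [i] ++ v' ∈ Ls k}} = Ls l)).card : ℤ) := by
        rw [Finset.card_filter]
        push_cast
        rw [← Equiv.sum_comp (Fin.consEquiv (fun _ => Fin n))
          (fun g => if {v | List.ofFn g ++ v ∈ Ls k} = Ls l then (1:ℤ) else 0)]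
        rw [Fintype.sum_prod_type]
        apply Finset.sum_congr rfl
        intro i _
        rw [Finset.card_filter]
        push_cast
        apply Finset.sum_congr rfl
        intro f _
        exact if_congr (hcons i f) rfl rfl
      rw [hcard]
      -- now prove equality of the two sums over states/letters
      have hSj : ∀ j : Fin m,
          ((Finset.univ.filter (fun i : Fin n => {v | [i] ++ v ∈ Ls k} = Ls j)).card : ℤ) =
          ∑ i : Fin n, if {v | [i] ++ v ∈ Ls k} = Ls j then (1:ℤ) else 0 := by
        intro j
        rw [Finset.card_filter]
        push_cast
        rfl
      calc ∑ j : Fin m,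
          ((Finset.univ.filter (fun i : Fin n => {v | [i] ++ v ∈ Ls k} = Ls j)).card : ℤ) *
          ((Finset.univ.filter (fun f : Fin p → Fin n =>
            {v | List.ofFn f ++ v ∈ Ls j} = Ls l)).card : ℤ)
          = ∑ j : Fin m, ∑ i : Fin n,
              (if {v | [i] ++ v ∈ Ls k} = Ls j then
                ((Finset.univ.filter (fun f : Fin p → Fin n =>
                  {v | List.ofFn f ++ v ∈ Ls j} = Ls l)).card : ℤ) else 0) := by
            apply Finset.sum_congr rfl
            intro j _
            rw [hSj j, Finset.sum_mul]
            apply Finset.sum_congr rfl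
            intro i _
            rw [ite_mul, one_mul, zero_mul]
        _ = ∑ i : Fin n, ∑ j : Fin m,
              (if {v | [i] ++ v ∈ Ls k} = Ls j then
                ((Finset.univ.filter (fun f : Fin p → Fin n =>
                  {v | List.ofFn f ++ v ∈ Ls j} = Ls l)).card : ℤ) else 0) :=
            Finset.sum_comm
        _ = ∑ i : Fin n, ((Finset.univ.filter (fun f : Fin p → Fin n =>
              {v | List.ofFn f ++ v ∈ {v' | [i] ++ v' ∈ Ls k}} = Ls l)).card : ℤ) := by
            apply Finset.sum_congr rfl
            intro i _
            rcases hstep k i with hu | ⟨j0, hj0⟩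
            · have hz : ∀ j : Fin m, ¬ ({v | [i] ++ v ∈ Ls k} = Ls j) := by
                intro j hj; exact hne j (hj ▸ hu)
              rw [Finset.sum_eq_zero (fun j _ => if_neg (hz j))]
              have : (Finset.univ.filter (fun f : Fin p → Fin n =>
                  {v | List.ofFn f ++ v ∈ {v' | [i] ++ v' ∈ Ls k}} = Ls l)) = ∅ := by
                rw [Finset.eq_empty_iff_forall_notMem]
                intro f hf
                rw [Finset.mem_filter] at hf
                apply hne l
                rw [← hf.2, hu]
                ext v; simp
              rw [this]
              simp
            · have hiff : ∀ j : Fin m, ({v | [i] ++ v ∈ Ls k} = Ls j) ↔ j = j0 := by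
                intro j
                constructor
                · intro hj; exact (hinj (hj0 ▸ hj : Ls j0 = Ls j)).symm
                · intro hj; subst hj; exact hj0
              rw [Finset.sum_congr rfl
                (fun j _ => if_congr (hiff j) rfl rfl)]
              rw [Finset.sum_ite_eq' Finset.univ j0]
              rw [if_pos (Finset.mem_univ j0)]
              rw [← hj0]
  constructor
  · -- finite ⇒ nilpotent
    intro hfin
    set N0 := hfin.toFinset.sup List.length with hN0
    have hbound : ∀ w : List (Fin n), w ∉ L → w.length ≤ N0 := by
      intro w hw
      exact Finset.le_sup (f := List.length) (hfin.mem_toFinset.mpr hw)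
    refine ⟨N0 + 1, ?_⟩
    ext k l
    rw [Matrix.zero_apply, key (N0+1) k l]
    norm_cast
    rw [Finset.card_eq_zero, Finset.eq_empty_iff_forall_notMem]
    intro f hf
    rw [Finset.mem_filter] at hf
    obtain ⟨w, hw⟩ := hmem k
    have h1 : {v | (w ++ List.ofFn f) ++ v ∈ L} = Ls l := by
      rw [← hf.2, hw]; ext v; simp [List.append_assoc]
    have h2 : {v : List (Fin n) | (w ++ List.ofFn f) ++ v ∈ L} ≠ Set.univ := h1 ▸ hne l
    obtain ⟨v, hv⟩ := (Set.ne_univ_iff_exists_notMem _).mp h2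
    have h3 : ((w ++ List.ofFn f) ++ v).length ≤ N0 := hbound _ hv
    have h4 : (List.ofFn f).length = N0 + 1 := by simp
    simp only [List.length_append, h4] at h3
    omega
  · rintro ⟨N, hN⟩
    apply Set.Finite.subset (List.finite_length_le (Fin n) N)
    intro w hw
    simp only [Set.mem_setOf_eq] at hw ⊢
    by_contra hlen
    push_neg at hlen
    set u := w.take N with hu
    have hul : u.length = N := by
      simp only [hu, List.length_take]
      omega
    have huL : u ∉ L := by
      intro h
      exact hw (by simpa [hu, List.take_append_drop] using hL u h (w.drop N))
    have hne' : {v : List (Fin n) | u ++ v ∈ L} ≠ Set.univ := by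
      intro h
      have : ([] : List (Fin n)) ∈ {v | u ++ v ∈ L} := h ▸ Set.mem_univ _
      simp only [Set.mem_setOf_eq, List.append_nil] at this
      exact huL this
    obtain ⟨l, hl⟩ := hsurj u hne'
    set f : Fin N → Fin n := fun i => u.get (Fin.cast hul.symm i) with hfdef
    have hof : List.ofFn f = u := by
      apply List.ext_get (by simp [hul])
      intro i h1 h2
      simp [hfdef]
    have hmemf : f ∈ Finset.univ.filter (fun f : Fin N → Fin n =>
        {v | List.ofFn f ++ v ∈ Ls ⟨0,hm⟩} = Ls l) := by
      rw [Finset.mem_filter]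
      refine ⟨Finset.mem_univ _, ?_⟩
      rw [hof, hLs0]; exact hl
    have hk := key N ⟨0,hm⟩ l
    rw [hN] at hk
    simp only [Matrix.zero_apply] at hk
    have hc : (Finset.univ.filter (fun f : Fin N → Fin n =>
        {v | List.ofFn f ++ v ∈ Ls ⟨0,hm⟩} = Ls l)).card = 0 := by exact_mod_cast hk.symm
    rw [Finset.card_eq_zero] at hc
    rw [hc] at hmemf
    exact absurd hmemf (Finset.notMem_empty f)
end

section
/- Let I ⊆ F be a monomial two-sided ideal, let d ≥ 0, and define the truncated ideal I^{(d)} = I + B^{d+1}, where B = ⟨x_1,…,x_n⟩. Then for any word w ∈ W with tdeg(w) = d': (I^{(d)} :_R w) = F if d' > d, and (I^{(d)} :_R w) = (I :_R w)^{(d−d')} = (I :_R w) + B^{d−d'+1} if d' ≤ d. -/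
noncomputable section

/-- B^d : the d-th power of the augmentation ideal B = ⟨x_1,…,x_n⟩, i.e. the
K-span of all words of length ≥ d. -/
def Bpow (K : Type) [Field K] (n d : ℕ) : Submodule K (FA K n) :=
  Submodule.span K
    {f | ∃ w : FreeMonoid (Fin n), d ≤ (FreeMonoid.toList w).length ∧ f = mono K w}


section Aux
variable (K : Type) [Field K] {n : ℕ}

/-- The submodule of elements supported in `S`. -/
def supp (S : Set (FreeMonoid (Fin n))) : Submodule K (FA K n) :=
  (Finsupp.supported K K S).map (MonoidAlgebra.coeffLinearEquiv K).symm.toLinearMap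

lemma mem_supp (S : Set (FreeMonoid (Fin n))) (f : FA K n) :
    f ∈ supp K S ↔ f.coeff ∈ Finsupp.supported K K S := by
  unfold supp
  rw [Submodule.mem_map_equiv]
  rfl

lemma supp_union (S T : Set (FreeMonoid (Fin n))) :
    supp K S ⊔ supp K T = supp K (S ∪ T) := by
  unfold supp
  rw [← Submodule.map_sup, Finsupp.supported_union]

lemma supp_univ : supp K (Set.univ : Set (FreeMonoid (Fin n))) = ⊤ := by
  unfold supp
  rw [Finsupp.supported_univ, Submodule.map_top]
  exact LinearEquiv.range _

lemma span_mono_eq_supported (S : Set (FreeMonoid (Fin n))) :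
    Submodule.span K {f | ∃ u ∈ S, f = mono K u} = supp K S := by
  unfold supp
  rw [Finsupp.supported_eq_span_single, Submodule.map_span]
  congr 1
  ext f
  constructor
  · rintro ⟨u, hu, rfl⟩; exact ⟨_, ⟨u, hu, rfl⟩, rfl⟩
  · rintro ⟨_, ⟨u, hu, rfl⟩, rfl⟩; exact ⟨u, hu, rfl⟩

lemma wLeftInj (w : FreeMonoid (Fin n)) :
    Function.Injective (fun u : FreeMonoid (Fin n) => w * u) := by
  intro a b h
  simpa using h

lemma mul_mono_eq_mapDomain (w : FreeMonoid (Fin n)) (f : FA K n) :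
    mono K w * f = MonoidAlgebra.mapDomain (fun u => w * u) f := by
  induction f using MonoidAlgebra.induction_linear with
  | zero => simp
  | add f g hf hg => simp [mul_add, MonoidAlgebra.mapDomain_add, hf, hg]
  | single u c =>
      rw [MonoidAlgebra.mapDomain_single]
      simp [mono, MonoidAlgebra.single_mul_single]

lemma comap_supported (w : FreeMonoid (Fin n)) (S : Set (FreeMonoid (Fin n))) :
    Submodule.comap (LinearMap.mulLeft K (mono K w)) (supp K S)
      = supp K ((fun u => w * u) ⁻¹' S) := by
  classical
  ext f
  rw [Submodule.mem_comap]
  show mono K w * f ∈ supp K S ↔ _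
  rw [mem_supp, mem_supp, mul_mono_eq_mapDomain]
  show Finsupp.mapDomain _ f.coeff ∈ _ ↔ _
  rw [Finsupp.mem_supported, Finsupp.mem_supported,
    Finsupp.mapDomain_support_of_injective (wLeftInj w) f.coeff, Finset.coe_image,
    Set.image_subset_iff]

lemma Bpow_eq_supported (m : ℕ) :
    Bpow K n m = supp K {v : FreeMonoid (Fin n) | m ≤ (FreeMonoid.toList v).length} :=
  span_mono_eq_supported K _

end Aux

/-- for a monomial two-sided ideal I, its truncation
I^{(d)} = I + B^{d+1} and a word w of length d',
(I^{(d)} :_R w) = F if d' > d, and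
(I^{(d)} :_R w) = (I :_R w)^{(d−d')} = (I :_R w) + B^{d−d'+1} if d' ≤ d. -/
theorem stmt_18 (K : Type) [Field K] (n : ℕ) (hn : 1 ≤ n) (d : ℕ)
    (L : Set (FreeMonoid (Fin n)))
    -- L is a two-sided-ideal language
    (hL : ∀ u ∈ L, ∀ a b : FreeMonoid (Fin n), a * u * b ∈ L)
    -- I is the corresponding monomial two-sided ideal
    (I : Submodule K (FA K n))
    (hI : I = Submodule.span K {f | ∃ u ∈ L, f = mono K u})
    (w : FreeMonoid (Fin n)) :
    Submodule.comap (LinearMap.mulLeft K (mono K w)) (I ⊔ Bpow K n (d + 1)) =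
      if d < (FreeMonoid.toList w).length then ⊤
      else Submodule.comap (LinearMap.mulLeft K (mono K w)) I ⊔
        Bpow K n (d - (FreeMonoid.toList w).length + 1) := by
  classical
  subst hI
  rw [span_mono_eq_supported, Bpow_eq_supported, supp_union,
    comap_supported, comap_supported]
  by_cases hd : d < (FreeMonoid.toList w).length
  · rw [if_pos hd]
    have hu : ((fun u => w * u) ⁻¹'
        (L ∪ {v : FreeMonoid (Fin n) | d + 1 ≤ (FreeMonoid.toList v).length})) = Set.univ := by
      ext u
      simp only [Set.mem_preimage, Set.mem_union, Set.mem_setOf_eq, Set.mem_univ, iff_true]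
      right
      rw [FreeMonoid.toList_mul, List.length_append]
      omega
    rw [hu, supp_univ]
  · rw [if_neg hd, Bpow_eq_supported, supp_union]
    have hle : (FreeMonoid.toList w).length ≤ d := not_lt.1 hd
    congr 1
    ext u
    simp only [Set.mem_preimage, Set.mem_union, Set.mem_setOf_eq, FreeMonoid.toList_mul,
      List.length_append]
    constructor
    · rintro (h | h)
      · exact Or.inl h
      · exact Or.inr (by omega)
    · rintro (h | h)
      · exact Or.inl h
      · exact Or.inr (by omega)
end
end
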